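/- arXiv:math/0611303 — 6 statements merged into one kernel-verified Lean document; each statement's English description precedes it below -/
import Mathlib

section
/- The split Cayley algebra C over k, with basis {e₁,e₂,u₀,u₁,u₂,v₀,v₁,v₂} and multiplication given by the standard split multiplication table, admits a group homomorphism from the symmetric group S₄ into Aut(C) determined by: e₁ and e₂ are fixed; τ₁ = (12)(34) sends u₀↦u₀, u₁↦−u₁, u₂↦−u₂ (similarly on v's); τ₂ = (23)(14) sends u₀↦−u₀, u₁↦u₁, u₂↦−u₂ (similarly on v's); φ = (123) sends uᵢ↦u_{i+1}, vᵢ↦v_{i+1} (indices mod 3); τ = (12) sends u₀↦−u₀, u₁↦−u₂, u₂↦−u₁ (similarly on v's). -/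
/-!
`S₄` is the rotation group of the cube. Letting `σ` send the vertex `P a` of a tetrahedron
inscribed in the cube to `sign σ • P (σ a)` gives a homomorphism `S₄ → SO(3, k)` (this needs
`1/4 ∈ k`). A matrix `M ∈ SO(3, k)` acts on the split octonions by fixing `e₁`, `e₂` and acting
as `M` on both `span u` and `span v`: in vector form the multiplication table reads
`u(x) u(y) = v(x × y)`, `v(x) v(y) = u(x × y)`, `u(x) v(y) = -(x ⬝ y) e₁`,
`v(x) u(y) = -(x ⬝ y) e₂`, and rotations preserve dot and cross products.
-/

open Matrix Equiv

section Orthogonal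

variable {R : Type*} [CommRing R]

theorem mulVec_cross_mulVec (M : Matrix (Fin 3) (Fin 3) R) (x y : Fin 3 → R) :
    (M *ᵥ x) ⨯₃ (M *ᵥ y) = M.adjugateᵀ *ᵥ (x ⨯₃ y) := by
  ext i
  fin_cases i <;>
    simp [adjugate_fin_three, cross_apply, mulVec, dotProduct, Fin.sum_univ_three] <;> ring

theorem adjugate_eq_transpose_of_orthogonal {n : Type*} [Fintype n] [DecidableEq n]
    {M : Matrix n n R} (hM : Mᵀ * M = 1) (hdet : M.det = 1) : M.adjugate = Mᵀ :=
  calc M.adjugate = Mᵀ * (M * M.adjugate) := by rw [← Matrix.mul_assoc, hM, Matrix.one_mul]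
    _ = Mᵀ := by rw [mul_adjugate, hdet, one_smul, Matrix.mul_one]

theorem mulVec_cross_mulVec_of_orthogonal {M : Matrix (Fin 3) (Fin 3) R} (hM : Mᵀ * M = 1)
    (hdet : M.det = 1) (x y : Fin 3 → R) : (M *ᵥ x) ⨯₃ (M *ᵥ y) = M *ᵥ (x ⨯₃ y) := by
  rw [mulVec_cross_mulVec, adjugate_eq_transpose_of_orthogonal hM hdet, transpose_transpose]

theorem mulVec_dotProduct_mulVec_of_orthogonal {n : Type*} [Fintype n] [DecidableEq n]
    {M : Matrix n n R} (hM : Mᵀ * M = 1) (x y : n → R) : (M *ᵥ x) ⬝ᵥ (M *ᵥ y) = x ⬝ᵥ y := by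
  rw [dotProduct_mulVec, ← vecMul_transpose, vecMul_vecMul, hM, vecMul_one]

end Orthogonal

namespace Fintype

@[simp]
theorem linearCombination_fun_zero (R : Type*) {M ι : Type*} [Semiring R] [AddCommMonoid M]
    [Module R M] [Fintype ι] : Fintype.linearCombination R (fun _ : ι => (0 : M)) = 0 := by
  ext
  simp [Fintype.linearCombination_apply]

variable {k C ι : Type*} [CommSemiring k] [NonUnitalNonAssocSemiring C] [Module k C] [Fintype ι]

theorem mul_linearCombination [SMulCommClass k C C] (c : C) (w : ι → C) (x : ι → k) :
    c * Fintype.linearCombination k w x = Fintype.linearCombination k (fun i => c * w i) x := by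
  simp [Fintype.linearCombination_apply, Finset.mul_sum, mul_smul_comm]

theorem linearCombination_mul [IsScalarTower k C C] (c : C) (w : ι → C) (x : ι → k) :
    Fintype.linearCombination k w x * c = Fintype.linearCombination k (fun i => w i * c) x := by
  simp [Fintype.linearCombination_apply, Finset.sum_mul, smul_mul_assoc]

end Fintype

theorem LinearMap.map_mul_of_span_eq_top {R A B : Type*} [CommSemiring R]
    [NonUnitalNonAssocSemiring A] [Module R A] [SMulCommClass R A A] [IsScalarTower R A A]
    [NonUnitalNonAssocSemiring B] [Module R B] [SMulCommClass R B B] [IsScalarTower R B B]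
    (f : A →ₗ[R] B) {s : Set A} (hs : Submodule.span R s = ⊤)
    (h : ∀ a ∈ s, ∀ b ∈ s, f (a * b) = f a * f b) (a b : A) : f (a * b) = f a * f b := by
  have : (LinearMap.mul R A).compr₂ f = (LinearMap.mul R B).compl₁₂ f f :=
    LinearMap.ext_on hs fun a ha => LinearMap.ext_on hs fun b hb => h a ha b hb
  exact LinearMap.congr_fun₂ this a b

section Tetrahedron

/-- The columns are the vertices of a regular tetrahedron inscribed in the cube `[-1,1]³`. -/
def tetra (R : Type*) [Ring R] : Matrix (Fin 3) (Fin 4) R :=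
  !![1, 1, -1, -1; -1, 1, 1, -1; 1, -1, 1, -1]

variable {R : Type*} [CommRing R]

theorem tetra_mul_transpose : tetra R * (tetra R)ᵀ = (4 : R) • 1 := by
  ext i j
  fin_cases i <;> fin_cases j <;> simp [tetra, mul_apply, Fin.sum_univ_four] <;> norm_num

theorem transpose_mul_tetra : (tetra R)ᵀ * tetra R = (4 : R) • 1 - vecMulVec 1 1 := by
  ext i j
  fin_cases i <;> fin_cases j <;> simp [tetra, mul_apply, Fin.sum_univ_three, vecMulVec] <;>
    norm_num

theorem tetra_mulVec_one : tetra R *ᵥ 1 = 0 := by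
  ext i
  fin_cases i <;> simp [tetra, mulVec, dotProduct, Fin.sum_univ_four]

theorem tetra_conj_mul_tetra_conj {P Q : Matrix (Fin 4) (Fin 4) R} (hP : P *ᵥ 1 = 1) :
    tetra R * P * (tetra R)ᵀ * (tetra R * Q * (tetra R)ᵀ) =
      (4 : R) • (tetra R * (P * Q) * (tetra R)ᵀ) := by
  simp only [Matrix.mul_assoc]
  rw [← Matrix.mul_assoc (tetra R)ᵀ, transpose_mul_tetra, Matrix.sub_mul, vecMulVec_mul,
    Matrix.mul_sub, Matrix.mul_sub, mul_vecMulVec, mul_vecMulVec, hP, tetra_mulVec_one]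
  simp

theorem four_ne_zero_of_two_ne_zero {k : Type*} [Field k] (h2 : (2 : k) ≠ 0) : (4 : k) ≠ 0 := by
  rw [show (4 : k) = 2 * 2 by norm_num]
  exact mul_ne_zero h2 h2

variable (k : Type*) [Field k]

/-- `σ` sends the vertex `tetra.col a` to `sign σ • tetra.col (σ a)`. The sign makes the
transpositions act by rotations rather than reflections. -/
noncomputable def tetraRep (h2 : (2 : k) ≠ 0) : Perm (Fin 4) →* Matrix (Fin 3) (Fin 3) k where
  toFun σ :=
    ((Perm.sign σ : k) / 4) • (tetra k * (permMatrixHom σ : Matrix (Fin 4) (Fin 4) k) * (tetra k)ᵀ)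
  map_one' := by simp [tetra_mul_transpose, smul_smul, four_ne_zero_of_two_ne_zero h2]
  map_mul' σ τ := by
    rw [smul_mul_smul_comm, tetra_conj_mul_tetra_conj (by simp [permMatrix_mulVec]), smul_smul,
      map_mul, map_mul, Units.val_mul, Int.cast_mul]
    congr 1
    field_simp [four_ne_zero_of_two_ne_zero h2]

variable {k} (h2 : (2 : k) ≠ 0)

theorem tetraRep_apply (σ : Perm (Fin 4)) (i j : Fin 3) :
    tetraRep k h2 σ i j = (Perm.sign σ : k) / 4 * ∑ a, tetra k i (σ a) * tetra k j a := by
  simp [tetraRep, PEquiv.mul_toMatrix_toPEquiv, mul_apply, Perm.inv_def]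

theorem transpose_tetraRep (σ : Perm (Fin 4)) : (tetraRep k h2 σ)ᵀ = tetraRep k h2 σ⁻¹ := by
  ext i j
  rw [transpose_apply, tetraRep_apply, tetraRep_apply, Perm.sign_inv,
    ← Equiv.sum_comp σ (fun a => tetra k i (σ⁻¹ a) * tetra k j a)]
  simp [mul_comm]

theorem transpose_tetraRep_mul_self (σ : Perm (Fin 4)) :
    (tetraRep k h2 σ)ᵀ * tetraRep k h2 σ = 1 := by
  rw [transpose_tetraRep, ← map_mul, inv_mul_cancel, map_one]

theorem det_tetraRep (σ : Perm (Fin 4)) : (tetraRep k h2 σ).det = 1 := by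
  suffices detMonoidHom.comp (tetraRep k h2) = 1 from DFunLike.congr_fun this σ
  refine MonoidHom.eq_of_eqOn_denseM (Perm.mclosure_swap_castSucc_succ 3) ?_
  rintro _ ⟨i, rfl⟩
  fin_cases i <;>
    simp +decide [det_fin_three, tetraRep_apply, Fin.sum_univ_four, tetra, swap_apply_def] <;>
    field_simp [four_ne_zero_of_two_ne_zero h2] <;> norm_num

theorem tetraRep_τ₁ : tetraRep k h2 (swap 0 1 * swap 2 3) = !![1, 0, 0; 0, -1, 0; 0, 0, -1] := by
  ext i j
  fin_cases i <;> fin_cases j <;>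
    simp +decide [tetraRep_apply, Fin.sum_univ_four, tetra, swap_apply_def] <;>
    field_simp [four_ne_zero_of_two_ne_zero h2] <;> norm_num

theorem tetraRep_τ₂ : tetraRep k h2 (swap 1 2 * swap 0 3) = !![-1, 0, 0; 0, 1, 0; 0, 0, -1] := by
  ext i j
  fin_cases i <;> fin_cases j <;>
    simp +decide [tetraRep_apply, Fin.sum_univ_four, tetra, swap_apply_def] <;>
    field_simp [four_ne_zero_of_two_ne_zero h2] <;> norm_num

theorem tetraRep_φ : tetraRep k h2 (swap 0 2 * swap 0 1) = !![0, 0, 1; 1, 0, 0; 0, 1, 0] := by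
  ext i j
  fin_cases i <;> fin_cases j <;>
    simp +decide [tetraRep_apply, Fin.sum_univ_four, tetra, swap_apply_def] <;>
    field_simp [four_ne_zero_of_two_ne_zero h2] <;> norm_num

theorem tetraRep_τ : tetraRep k h2 (swap 0 1) = !![-1, 0, 0; 0, 0, -1; 0, -1, 0] := by
  ext i j
  fin_cases i <;> fin_cases j <;>
    simp +decide [tetraRep_apply, Fin.sum_univ_four, tetra, swap_apply_def] <;>
    field_simp [four_ne_zero_of_two_ne_zero h2] <;> norm_num

end Tetrahedron

namespace SplitCayley

/-- Indices are taken in `Fin 3`, whose addition is also mod 3; `ZMod 3` unfolds to `Fin 3`,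
so everything below applies verbatim to families indexed by `ZMod 3`. -/
structure MulTable {C : Type*} [Mul C] [Zero C] [Neg C] (e₁ e₂ : C) (u v : Fin 3 → C) :
    Prop where
  e₁_mul_e₁ : e₁ * e₁ = e₁
  e₂_mul_e₂ : e₂ * e₂ = e₂
  e₁_mul_e₂ : e₁ * e₂ = 0
  e₂_mul_e₁ : e₂ * e₁ = 0
  e₁_mul_u : ∀ i, e₁ * u i = u i
  u_mul_e₂ : ∀ i, u i * e₂ = u i
  e₂_mul_v : ∀ i, e₂ * v i = v i
  v_mul_e₁ : ∀ i, v i * e₁ = v i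
  e₂_mul_u : ∀ i, e₂ * u i = 0
  u_mul_e₁ : ∀ i, u i * e₁ = 0
  e₁_mul_v : ∀ i, e₁ * v i = 0
  v_mul_e₂ : ∀ i, v i * e₂ = 0
  u_mul_u_add_one : ∀ i, u i * u (i + 1) = v (i + 2)
  u_add_one_mul_u : ∀ i, u (i + 1) * u i = -v (i + 2)
  v_mul_v_add_one : ∀ i, v i * v (i + 1) = u (i + 2)
  v_add_one_mul_v : ∀ i, v (i + 1) * v i = -u (i + 2)
  u_mul_self : ∀ i, u i * u i = 0
  v_mul_self : ∀ i, v i * v i = 0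
  u_mul_v : ∀ i j, u i * v j = if i = j then -e₁ else 0
  v_mul_u : ∀ i j, v i * u j = if i = j then -e₂ else 0

namespace MulTable

variable {k C : Type*} [CommRing k] [NonAssocRing C] [Module k C] [SMulCommClass k C C]
  [IsScalarTower k C C] {e₁ e₂ : C} {u v : Fin 3 → C}

theorem linearCombination_u_mul_u (h : MulTable e₁ e₂ u v) (x y : Fin 3 → k) :
    Fintype.linearCombination k u x * Fintype.linearCombination k u y =
      Fintype.linearCombination k v (x ⨯₃ y) := by
  have h01 := h.u_mul_u_add_one 0
  have h12 := h.u_mul_u_add_one 1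
  have h20 := h.u_mul_u_add_one 2
  have h10 := h.u_add_one_mul_u 0
  have h21 := h.u_add_one_mul_u 1
  have h02 := h.u_add_one_mul_u 2
  simp only [Fin.reduceAdd, zero_add] at h01 h12 h20 h10 h21 h02
  simp [Fintype.linearCombination_apply, Fin.sum_univ_three, add_mul, mul_add,
    smul_mul_smul_comm, h.u_mul_self, h01, h12, h20, h10, h21, h02, cross_apply]
  module

theorem linearCombination_v_mul_v (h : MulTable e₁ e₂ u v) (x y : Fin 3 → k) :
    Fintype.linearCombination k v x * Fintype.linearCombination k v y =
      Fintype.linearCombination k u (x ⨯₃ y) := by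
  have h01 := h.v_mul_v_add_one 0
  have h12 := h.v_mul_v_add_one 1
  have h20 := h.v_mul_v_add_one 2
  have h10 := h.v_add_one_mul_v 0
  have h21 := h.v_add_one_mul_v 1
  have h02 := h.v_add_one_mul_v 2
  simp only [Fin.reduceAdd, zero_add] at h01 h12 h20 h10 h21 h02
  simp [Fintype.linearCombination_apply, Fin.sum_univ_three, add_mul, mul_add,
    smul_mul_smul_comm, h.v_mul_self, h01, h12, h20, h10, h21, h02, cross_apply]
  module

theorem linearCombination_u_mul_v (h : MulTable e₁ e₂ u v) (x y : Fin 3 → k) :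
    Fintype.linearCombination k u x * Fintype.linearCombination k v y = -(x ⬝ᵥ y) • e₁ := by
  simp [Fintype.linearCombination_apply, Fin.sum_univ_three, add_mul, mul_add,
    smul_mul_smul_comm, h.u_mul_v, dotProduct]
  module

theorem linearCombination_v_mul_u (h : MulTable e₁ e₂ u v) (x y : Fin 3 → k) :
    Fintype.linearCombination k v x * Fintype.linearCombination k u y = -(x ⬝ᵥ y) • e₂ := by
  simp [Fintype.linearCombination_apply, Fin.sum_univ_three, add_mul, mul_add,
    smul_mul_smul_comm, h.v_mul_u, dotProduct]
  module

end MulTable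

section MatrixAction

variable {k C : Type*} [CommRing k] [AddCommGroup C] [Module k C] {e₁ e₂ : C} {u v : Fin 3 → C}

theorem linearMap_ext {D : Type*} [AddCommGroup D] [Module k D]
    (hspan : Submodule.span k (Set.range ![e₁, e₂, u 0, u 1, u 2, v 0, v 1, v 2]) = ⊤)
    {f g : C →ₗ[k] D} (h₁ : f e₁ = g e₁) (h₂ : f e₂ = g e₂) (hu : ∀ i, f (u i) = g (u i))
    (hv : ∀ i, f (v i) = g (v i)) : f = g :=
  LinearMap.ext_on_range hspan fun j => by
    fin_cases j
    exacts [h₁, h₂, hu 0, hu 1, hu 2, hv 0, hv 1, hv 2]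

theorem span_insert_insert_range_union_range_eq_top
    (hspan : Submodule.span k (Set.range ![e₁, e₂, u 0, u 1, u 2, v 0, v 1, v 2]) = ⊤) :
    Submodule.span k (insert e₁ (insert e₂ (Set.range (Fintype.linearCombination k u) ∪
      Set.range (Fintype.linearCombination k v)))) = ⊤ := by
  refine top_le_iff.mp (hspan ▸ Submodule.span_mono ?_)
  have hu (i : Fin 3) : u i ∈ Set.range (Fintype.linearCombination k u) :=
    ⟨Pi.single i 1, by simp⟩
  have hv (i : Fin 3) : v i ∈ Set.range (Fintype.linearCombination k v) :=
    ⟨Pi.single i 1, by simp⟩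
  rintro _ ⟨j, rfl⟩
  fin_cases j <;> simp [hu, hv]

variable (hindep : LinearIndependent k ![e₁, e₂, u 0, u 1, u 2, v 0, v 1, v 2])
  (hspan : Submodule.span k (Set.range ![e₁, e₂, u 0, u 1, u 2, v 0, v 1, v 2]) = ⊤)

/-- `span v` transforms by `M` rather than by `M⁻ᵀ` as under `SL(3) ⊆ G₂`; the two agree on
`SO(3)`, which is where this map is an automorphism. -/
noncomputable def matrixAction (M : Matrix (Fin 3) (Fin 3) k) : C →ₗ[k] C :=
  (Module.Basis.mk hindep hspan.ge).constr k
    ![e₁, e₂, Fintype.linearCombination k u (M.col 0), Fintype.linearCombination k u (M.col 1),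
      Fintype.linearCombination k u (M.col 2), Fintype.linearCombination k v (M.col 0),
      Fintype.linearCombination k v (M.col 1), Fintype.linearCombination k v (M.col 2)]

variable (M : Matrix (Fin 3) (Fin 3) k)

theorem matrixAction_basis (j : Fin 8) :
    matrixAction hindep hspan M (![e₁, e₂, u 0, u 1, u 2, v 0, v 1, v 2] j) =
      ![e₁, e₂, Fintype.linearCombination k u (M.col 0), Fintype.linearCombination k u (M.col 1),
        Fintype.linearCombination k u (M.col 2), Fintype.linearCombination k v (M.col 0),
        Fintype.linearCombination k v (M.col 1), Fintype.linearCombination k v (M.col 2)] j := by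
  rw [matrixAction, ← Module.Basis.mk_apply hindep hspan.ge, Module.Basis.constr_basis]

@[simp]
theorem matrixAction_e₁ : matrixAction hindep hspan M e₁ = e₁ :=
  matrixAction_basis hindep hspan M 0

@[simp]
theorem matrixAction_e₂ : matrixAction hindep hspan M e₂ = e₂ :=
  matrixAction_basis hindep hspan M 1

theorem matrixAction_u (i : Fin 3) :
    matrixAction hindep hspan M (u i) = Fintype.linearCombination k u (M.col i) := by
  fin_cases i
  exacts [matrixAction_basis hindep hspan M 2, matrixAction_basis hindep hspan M 3,
    matrixAction_basis hindep hspan M 4]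

theorem matrixAction_v (i : Fin 3) :
    matrixAction hindep hspan M (v i) = Fintype.linearCombination k v (M.col i) := by
  fin_cases i
  exacts [matrixAction_basis hindep hspan M 5, matrixAction_basis hindep hspan M 6,
    matrixAction_basis hindep hspan M 7]

@[simp]
theorem matrixAction_linearCombination_u (x : Fin 3 → k) :
    matrixAction hindep hspan M (Fintype.linearCombination k u x) =
      Fintype.linearCombination k u (M *ᵥ x) := by
  have : (matrixAction hindep hspan M).comp (Fintype.linearCombination k u) =
      (Fintype.linearCombination k u).comp M.mulVecLin :=
    (Pi.basisFun k (Fin 3)).ext fun i => by simp [matrixAction_u]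
  exact LinearMap.congr_fun this x

@[simp]
theorem matrixAction_linearCombination_v (x : Fin 3 → k) :
    matrixAction hindep hspan M (Fintype.linearCombination k v x) =
      Fintype.linearCombination k v (M *ᵥ x) := by
  have : (matrixAction hindep hspan M).comp (Fintype.linearCombination k v) =
      (Fintype.linearCombination k v).comp M.mulVecLin :=
    (Pi.basisFun k (Fin 3)).ext fun i => by simp [matrixAction_v]
  exact LinearMap.congr_fun this x

theorem matrixAction_one : matrixAction hindep hspan 1 = LinearMap.id :=
  linearMap_ext hspan (by simp) (by simp)
    (fun i => by rw [matrixAction_u, ← mulVec_single_one, one_mulVec]; simp)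
    (fun i => by rw [matrixAction_v, ← mulVec_single_one, one_mulVec]; simp)

theorem matrixAction_mul (N : Matrix (Fin 3) (Fin 3) k) :
    matrixAction hindep hspan (M * N) =
      matrixAction hindep hspan M ∘ₗ matrixAction hindep hspan N :=
  linearMap_ext hspan (by simp) (by simp)
    (fun i => by
      simp only [LinearMap.comp_apply, matrixAction_u, matrixAction_linearCombination_u,
        ← mulVec_single_one, mulVec_mulVec])
    (fun i => by
      simp only [LinearMap.comp_apply, matrixAction_v, matrixAction_linearCombination_v,
        ← mulVec_single_one, mulVec_mulVec])

noncomputable def matrixActionHom : Matrix (Fin 3) (Fin 3) k →* Module.End k C where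
  toFun := matrixAction hindep hspan
  map_one' := matrixAction_one hindep hspan
  map_mul' := matrixAction_mul hindep hspan

end MatrixAction

theorem matrixAction_map_mul {k C : Type*} [CommRing k] [NonAssocRing C] [Module k C]
    [SMulCommClass k C C] [IsScalarTower k C C] {e₁ e₂ : C} {u v : Fin 3 → C}
    (hindep : LinearIndependent k ![e₁, e₂, u 0, u 1, u 2, v 0, v 1, v 2])
    (hspan : Submodule.span k (Set.range ![e₁, e₂, u 0, u 1, u 2, v 0, v 1, v 2]) = ⊤)
    (h : MulTable e₁ e₂ u v) {M : Matrix (Fin 3) (Fin 3) k} (hM : Mᵀ * M = 1)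
    (hdet : M.det = 1) (a b : C) :
    matrixAction hindep hspan M (a * b) =
      matrixAction hindep hspan M a * matrixAction hindep hspan M b := by
  refine LinearMap.map_mul_of_span_eq_top _
    (span_insert_insert_range_union_range_eq_top hspan) ?_ a b
  rintro _ (rfl | rfl | ⟨x, rfl⟩ | ⟨x, rfl⟩) _ (rfl | rfl | ⟨y, rfl⟩ | ⟨y, rfl⟩) <;>
    simp [h.e₁_mul_e₁, h.e₁_mul_e₂, h.e₂_mul_e₁, h.e₂_mul_e₂, Fintype.mul_linearCombination,
      Fintype.linearCombination_mul, h.e₁_mul_u, h.e₂_mul_u, h.e₁_mul_v, h.e₂_mul_v, h.u_mul_e₁,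
      h.u_mul_e₂, h.v_mul_e₁, h.v_mul_e₂, h.linearCombination_u_mul_u, h.linearCombination_u_mul_v,
      h.linearCombination_v_mul_u, h.linearCombination_v_mul_v,
      mulVec_cross_mulVec_of_orthogonal hM hdet, mulVec_dotProduct_mulVec_of_orthogonal hM]

section S4Action

variable {k C : Type*} [Field k] [AddCommGroup C] [Module k C] {e₁ e₂ : C} {u v : Fin 3 → C}
  (hindep : LinearIndependent k ![e₁, e₂, u 0, u 1, u 2, v 0, v 1, v 2])
  (hspan : Submodule.span k (Set.range ![e₁, e₂, u 0, u 1, u 2, v 0, v 1, v 2]) = ⊤)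
  (h2 : (2 : k) ≠ 0)

noncomputable def s4Action : Perm (Fin 4) →* (C ≃ₗ[k] C) :=
  (LinearMap.GeneralLinearGroup.generalLinearEquiv k C).toMonoidHom.comp
    ((matrixActionHom hindep hspan).comp (tetraRep k h2)).toHomUnits

theorem s4Action_apply (σ : Perm (Fin 4)) (x : C) :
    s4Action hindep hspan h2 σ x = matrixAction hindep hspan (tetraRep k h2 σ) x :=
  rfl

theorem s4Action_τ₁ :
    s4Action hindep hspan h2 (swap 0 1 * swap 2 3) (u 0) = u 0 ∧
    s4Action hindep hspan h2 (swap 0 1 * swap 2 3) (u 1) = -u 1 ∧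
    s4Action hindep hspan h2 (swap 0 1 * swap 2 3) (u 2) = -u 2 ∧
    s4Action hindep hspan h2 (swap 0 1 * swap 2 3) (v 0) = v 0 ∧
    s4Action hindep hspan h2 (swap 0 1 * swap 2 3) (v 1) = -v 1 ∧
    s4Action hindep hspan h2 (swap 0 1 * swap 2 3) (v 2) = -v 2 := by
  simp only [s4Action_apply, tetraRep_τ₁]
  simp [matrixAction_u, matrixAction_v, Fintype.linearCombination_apply, Fin.sum_univ_three]

theorem s4Action_τ₂ :
    s4Action hindep hspan h2 (swap 1 2 * swap 0 3) (u 0) = -u 0 ∧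
    s4Action hindep hspan h2 (swap 1 2 * swap 0 3) (u 1) = u 1 ∧
    s4Action hindep hspan h2 (swap 1 2 * swap 0 3) (u 2) = -u 2 ∧
    s4Action hindep hspan h2 (swap 1 2 * swap 0 3) (v 0) = -v 0 ∧
    s4Action hindep hspan h2 (swap 1 2 * swap 0 3) (v 1) = v 1 ∧
    s4Action hindep hspan h2 (swap 1 2 * swap 0 3) (v 2) = -v 2 := by
  simp only [s4Action_apply, tetraRep_τ₂]
  simp [matrixAction_u, matrixAction_v, Fintype.linearCombination_apply, Fin.sum_univ_three]

theorem s4Action_φ (i : Fin 3) :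
    s4Action hindep hspan h2 (swap 0 2 * swap 0 1) (u i) = u (i + 1) ∧
    s4Action hindep hspan h2 (swap 0 2 * swap 0 1) (v i) = v (i + 1) := by
  simp only [s4Action_apply, tetraRep_φ]
  fin_cases i <;>
    simp [matrixAction_u, matrixAction_v, Fintype.linearCombination_apply, Fin.sum_univ_three]

theorem s4Action_τ :
    s4Action hindep hspan h2 (swap 0 1) (u 0) = -u 0 ∧
    s4Action hindep hspan h2 (swap 0 1) (u 1) = -u 2 ∧
    s4Action hindep hspan h2 (swap 0 1) (u 2) = -u 1 ∧
    s4Action hindep hspan h2 (swap 0 1) (v 0) = -v 0 ∧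
    s4Action hindep hspan h2 (swap 0 1) (v 1) = -v 2 ∧
    s4Action hindep hspan h2 (swap 0 1) (v 2) = -v 1 := by
  simp only [s4Action_apply, tetraRep_τ]
  simp [matrixAction_u, matrixAction_v, Fintype.linearCombination_apply, Fin.sum_univ_three]

end S4Action

end SplitCayley

open SplitCayley in
theorem splitCayley_S4_action_general
    (k : Type*) [Field k] (hk2 : (2 : k) ≠ 0)
    (C : Type*) [NonAssocRing C] [Module k C]
    [SMulCommClass k C C] [IsScalarTower k C C]
    (e1 e2 : C) (u v : ZMod 3 → C)
    -- the standard split multiplication table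
    (he1 : e1 * e1 = e1) (he2 : e2 * e2 = e2) (he12 : e1 * e2 = 0) (he21 : e2 * e1 = 0)
    (he1u : ∀ i, e1 * u i = u i) (hue2 : ∀ i, u i * e2 = u i)
    (he2v : ∀ i, e2 * v i = v i) (hve1 : ∀ i, v i * e1 = v i)
    (he2u : ∀ i, e2 * u i = 0) (hue1 : ∀ i, u i * e1 = 0)
    (he1v : ∀ i, e1 * v i = 0) (hve2 : ∀ i, v i * e2 = 0)
    (huu : ∀ i, u i * u (i + 1) = v (i + 2)) (huu' : ∀ i, u (i + 1) * u i = - v (i + 2))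
    (hvv : ∀ i, v i * v (i + 1) = u (i + 2)) (hvv' : ∀ i, v (i + 1) * v i = - u (i + 2))
    (husq : ∀ i, u i * u i = 0) (hvsq : ∀ i, v i * v i = 0)
    (huv : ∀ i j, u i * v j = if i = j then -e1 else 0)
    (hvu : ∀ i j, v i * u j = if i = j then -e2 else 0)
    -- `{e₁,e₂,u₀,u₁,u₂,v₀,v₁,v₂}` is a basis of `C`
    (hindep : LinearIndependent k ![e1, e2, u 0, u 1, u 2, v 0, v 1, v 2])
    (hspan : Submodule.span k (Set.range ![e1, e2, u 0, u 1, u 2, v 0, v 1, v 2]) = ⊤) :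
    ∃ ρ : Equiv.Perm (Fin 4) →* (C ≃ₗ[k] C),
      (∀ σ : Equiv.Perm (Fin 4), ∀ a b : C, ρ σ (a * b) = ρ σ a * ρ σ b) ∧
      (∀ σ : Equiv.Perm (Fin 4), ρ σ e1 = e1 ∧ ρ σ e2 = e2) ∧
      -- τ₁ = (12)(34)
      (ρ (Equiv.swap (0 : Fin 4) 1 * Equiv.swap 2 3) (u 0) = u 0 ∧
       ρ (Equiv.swap (0 : Fin 4) 1 * Equiv.swap 2 3) (u 1) = - u 1 ∧
       ρ (Equiv.swap (0 : Fin 4) 1 * Equiv.swap 2 3) (u 2) = - u 2 ∧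
       ρ (Equiv.swap (0 : Fin 4) 1 * Equiv.swap 2 3) (v 0) = v 0 ∧
       ρ (Equiv.swap (0 : Fin 4) 1 * Equiv.swap 2 3) (v 1) = - v 1 ∧
       ρ (Equiv.swap (0 : Fin 4) 1 * Equiv.swap 2 3) (v 2) = - v 2) ∧
      -- τ₂ = (23)(14)
      (ρ (Equiv.swap (1 : Fin 4) 2 * Equiv.swap 0 3) (u 0) = - u 0 ∧
       ρ (Equiv.swap (1 : Fin 4) 2 * Equiv.swap 0 3) (u 1) = u 1 ∧
       ρ (Equiv.swap (1 : Fin 4) 2 * Equiv.swap 0 3) (u 2) = - u 2 ∧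
       ρ (Equiv.swap (1 : Fin 4) 2 * Equiv.swap 0 3) (v 0) = - v 0 ∧
       ρ (Equiv.swap (1 : Fin 4) 2 * Equiv.swap 0 3) (v 1) = v 1 ∧
       ρ (Equiv.swap (1 : Fin 4) 2 * Equiv.swap 0 3) (v 2) = - v 2) ∧
      -- φ = (123)
      (∀ i, ρ (Equiv.swap (0 : Fin 4) 2 * Equiv.swap 0 1) (u i) = u (i + 1) ∧
            ρ (Equiv.swap (0 : Fin 4) 2 * Equiv.swap 0 1) (v i) = v (i + 1)) ∧
      -- τ = (12)
      (ρ (Equiv.swap (0 : Fin 4) 1) (u 0) = - u 0 ∧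
       ρ (Equiv.swap (0 : Fin 4) 1) (u 1) = - u 2 ∧
       ρ (Equiv.swap (0 : Fin 4) 1) (u 2) = - u 1 ∧
       ρ (Equiv.swap (0 : Fin 4) 1) (v 0) = - v 0 ∧
       ρ (Equiv.swap (0 : Fin 4) 1) (v 1) = - v 2 ∧
       ρ (Equiv.swap (0 : Fin 4) 1) (v 2) = - v 1) := by
  have h : MulTable e1 e2 u v := ⟨he1, he2, he12, he21, he1u, hue2, he2v, hve1, he2u, hue1,
    he1v, hve2, huu, huu', hvv, hvv', husq, hvsq, huv, hvu⟩
  exact ⟨s4Action hindep hspan hk2,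
    fun σ => matrixAction_map_mul hindep hspan h (transpose_tetraRep_mul_self hk2 σ)
      (det_tetraRep hk2 σ),
    fun σ => ⟨matrixAction_e₁ hindep hspan _, matrixAction_e₂ hindep hspan _⟩,
    s4Action_τ₁ hindep hspan hk2, s4Action_τ₂ hindep hspan hk2, s4Action_φ hindep hspan hk2,
    s4Action_τ hindep hspan hk2⟩

/-- The split Cayley algebra `C` over `k`, with basis
`{e₁,e₂,u₀,u₁,u₂,v₀,v₁,v₂}` and the standard split multiplication table, admits a
group homomorphism from the symmetric group `S₄` into `Aut(C)` determined by:
`e₁`, `e₂` are fixed by every element; `τ₁ = (12)(34)`, `τ₂ = (23)(14)`,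
`φ = (123)`, `τ = (12)` act on the `uᵢ`'s and `vᵢ`'s by the signed permutations
described in the paper. -/
theorem splitCayley_S4_action
    (k : Type*) [Field k] (hk2 : (2 : k) ≠ 0) (hk3 : (3 : k) ≠ 0)
    (C : Type*) [NonAssocRing C] [Module k C]
    [SMulCommClass k C C] [IsScalarTower k C C]
    (e1 e2 : C) (u v : ZMod 3 → C)
    -- the standard split multiplication table
    (he1 : e1 * e1 = e1) (he2 : e2 * e2 = e2) (he12 : e1 * e2 = 0) (he21 : e2 * e1 = 0)
    (he1u : ∀ i, e1 * u i = u i) (hue2 : ∀ i, u i * e2 = u i)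
    (he2v : ∀ i, e2 * v i = v i) (hve1 : ∀ i, v i * e1 = v i)
    (he2u : ∀ i, e2 * u i = 0) (hue1 : ∀ i, u i * e1 = 0)
    (he1v : ∀ i, e1 * v i = 0) (hve2 : ∀ i, v i * e2 = 0)
    (huu : ∀ i, u i * u (i + 1) = v (i + 2)) (huu' : ∀ i, u (i + 1) * u i = - v (i + 2))
    (hvv : ∀ i, v i * v (i + 1) = u (i + 2)) (hvv' : ∀ i, v (i + 1) * v i = - u (i + 2))
    (husq : ∀ i, u i * u i = 0) (hvsq : ∀ i, v i * v i = 0)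
    (huv : ∀ i j, u i * v j = if i = j then -e1 else 0)
    (hvu : ∀ i j, v i * u j = if i = j then -e2 else 0)
    -- `{e₁,e₂,u₀,u₁,u₂,v₀,v₁,v₂}` is a basis of `C`
    (hindep : LinearIndependent k ![e1, e2, u 0, u 1, u 2, v 0, v 1, v 2])
    (hspan : Submodule.span k (Set.range ![e1, e2, u 0, u 1, u 2, v 0, v 1, v 2]) = ⊤) :
    ∃ ρ : Equiv.Perm (Fin 4) →* (C ≃ₗ[k] C),
      (∀ σ : Equiv.Perm (Fin 4), ∀ a b : C, ρ σ (a * b) = ρ σ a * ρ σ b) ∧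
      (∀ σ : Equiv.Perm (Fin 4), ρ σ e1 = e1 ∧ ρ σ e2 = e2) ∧
      -- τ₁ = (12)(34)
      (ρ (Equiv.swap (0 : Fin 4) 1 * Equiv.swap 2 3) (u 0) = u 0 ∧
       ρ (Equiv.swap (0 : Fin 4) 1 * Equiv.swap 2 3) (u 1) = - u 1 ∧
       ρ (Equiv.swap (0 : Fin 4) 1 * Equiv.swap 2 3) (u 2) = - u 2 ∧
       ρ (Equiv.swap (0 : Fin 4) 1 * Equiv.swap 2 3) (v 0) = v 0 ∧
       ρ (Equiv.swap (0 : Fin 4) 1 * Equiv.swap 2 3) (v 1) = - v 1 ∧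
       ρ (Equiv.swap (0 : Fin 4) 1 * Equiv.swap 2 3) (v 2) = - v 2) ∧
      -- τ₂ = (23)(14)
      (ρ (Equiv.swap (1 : Fin 4) 2 * Equiv.swap 0 3) (u 0) = - u 0 ∧
       ρ (Equiv.swap (1 : Fin 4) 2 * Equiv.swap 0 3) (u 1) = u 1 ∧
       ρ (Equiv.swap (1 : Fin 4) 2 * Equiv.swap 0 3) (u 2) = - u 2 ∧
       ρ (Equiv.swap (1 : Fin 4) 2 * Equiv.swap 0 3) (v 0) = - v 0 ∧
       ρ (Equiv.swap (1 : Fin 4) 2 * Equiv.swap 0 3) (v 1) = v 1 ∧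
       ρ (Equiv.swap (1 : Fin 4) 2 * Equiv.swap 0 3) (v 2) = - v 2) ∧
      -- φ = (123)
      (∀ i, ρ (Equiv.swap (0 : Fin 4) 2 * Equiv.swap 0 1) (u i) = u (i + 1) ∧
            ρ (Equiv.swap (0 : Fin 4) 2 * Equiv.swap 0 1) (v i) = v (i + 1)) ∧
      -- τ = (12)
      (ρ (Equiv.swap (0 : Fin 4) 1) (u 0) = - u 0 ∧
       ρ (Equiv.swap (0 : Fin 4) 1) (u 1) = - u 2 ∧
       ρ (Equiv.swap (0 : Fin 4) 1) (u 2) = - u 1 ∧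
       ρ (Equiv.swap (0 : Fin 4) 1) (v 0) = - v 0 ∧
       ρ (Equiv.swap (0 : Fin 4) 1) (v 1) = - v 2 ∧
       ρ (Equiv.swap (0 : Fin 4) 1) (v 2) = - v 1) :=
  splitCayley_S4_action_general k hk2 C e1 e2 u v he1 he2 he12 he21 he1u hue2 he2v hve1 he2u hue1
    he1v hve2 huu huu' hvv hvv' husq hvsq huv hvu hindep hspan
end

section
/- Let J be a unital Jordan algebra with normalized trace t_J. Then the multiplication (α,x,y,β)·(α',x',y',β') = (αα' + 3t_J(xy'), αx' + β'x + y×y', α'y + βy' + x×x', ββ' + 3t_J(yx')) makes A(J) = k ⊕ J ⊕ J ⊕ k a unital algebra with unit (1,0,0,1), and the map (α,x,y,β) ↦ (β,x,y,α) is an involutive antiautomorphism of A(J). -/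
section
variable {k : Type*} [Field k] {J : Type*} [NonAssocRing J] [Module k J]

/-- The cross product attached to a normalized trace on a unital Jordan algebra. -/
def crossProd (tJ : J →ₗ[k] k) (x y : J) : J :=
  2 • (x * y) - (3 * tJ x) • y - (3 * tJ y) • x
    + (9 * tJ x * tJ y - 3 * tJ (x * y)) • (1 : J)

/-- Multiplication of the algebra `A(J) = k ⊕ J ⊕ J ⊕ k`, elements written as
quadruples `(α, x, y, β)` standing for the matrix `(α x; y β)`. -/
def aMul (tJ : J →ₗ[k] k) (z w : k × J × J × k) : k × J × J × k :=
  (z.1 * w.1 + 3 * tJ (z.2.1 * w.2.2.1),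
   z.1 • w.2.1 + w.2.2.2 • z.2.1 + crossProd tJ z.2.2.1 w.2.2.1,
   w.1 • z.2.2.1 + z.2.2.2 • w.2.2.1 + crossProd tJ z.2.1 w.2.1,
   z.2.2.2 * w.2.2.2 + 3 * tJ (z.2.2.1 * w.2.1))

/-- The exchange map `(α, x, y, β) ↦ (β, x, y, α)` on `A(J)`. -/
def aInv (z : k × J × J × k) : k × J × J × k := (z.2.2.2, z.2.1, z.2.2.1, z.1)

end

/-- For a unital Jordan algebra `J` with normalized trace `t_J`,
the algebra `A(J) = k ⊕ J ⊕ J ⊕ k` with the multiplication built from `t_J` and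
the cross product is unital with unit `(1,0,0,1)`, and the map
`(α,x,y,β) ↦ (β,x,y,α)` is an involutive antiautomorphism of `A(J)`. -/
theorem structurableAJ_unital_and_involution
    (k : Type*) [Field k] (hk2 : (2 : k) ≠ 0) (hk3 : (3 : k) ≠ 0)
    (J : Type*) [NonAssocRing J] [Module k J]
    [SMulCommClass k J J] [IsScalarTower k J J]
    (hcomm : ∀ x y : J, x * y = y * x)
    (hjordan : ∀ x y : J, ((x * x) * y) * x = (x * x) * (y * x))
    (tJ : J →ₗ[k] k) (h1 : tJ 1 = 1)
    (hassoc : ∀ x y z : J, tJ ((x * y) * z) = tJ (x * (y * z))) :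
    (∀ z : k × J × J × k,
      aMul tJ ((1 : k), (0 : J), (0 : J), (1 : k)) z = z ∧
      aMul tJ z ((1 : k), (0 : J), (0 : J), (1 : k)) = z) ∧
    (∀ z w : k × J × J × k, aInv (aMul tJ z w) = aMul tJ (aInv w) (aInv z)) ∧
    (∀ z : k × J × J × k, aInv (aInv z) = z) := by
  refine ⟨fun z => ⟨?_, ?_⟩, fun z w => ?_, fun z => rfl⟩
  · simp [aMul, crossProd]
  · simp [aMul, crossProd]
  · simp only [aMul, aInv, crossProd, Prod.mk.injEq]
    refine ⟨by rw [hcomm]; ring, ?_, ?_, by rw [hcomm]; ring⟩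
    · rw [hcomm w.2.2.1 z.2.2.1, mul_right_comm 9 (tJ w.2.2.1)]; abel
    · rw [hcomm w.2.1 z.2.1, mul_right_comm 9 (tJ w.2.1)]; abel
end

section
/- Let Q be the quaternion subalgebra of the split Cayley algebra spanned by {e₁+e₂, u₀+v₀, u₁+v₁, u₂+v₂}, and J a unital Jordan algebra with normalized trace. Then the linear map from T(Q,J)_{(1̄,0̄)} = k·D_{u₁+v₁,u₂+v₂} ⊕ ((u₀+v₀)⊗J⁰) to A(J) induced by Φ has image the subalgebra S = {(3α, −α+x, −α+x, 3α) : α ∈ k, x ∈ J⁰}, and the linear map J → S sending α1 + x ↦ ((3/4)α, −(1/4)α + (1/2)x, −(1/4)α + (1/2)x, (3/4)α) is an algebra isomorphism. -/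
set_option maxHeartbeats 1600000

/-- For the `S₄`-invariant quaternion subalgebra
`Q = span{e₁+e₂, u₀+v₀, u₁+v₁, u₂+v₂}` of the split Cayley algebra, the image of
`T(Q,J)_{(1̄,0̄)} = k·D_{u₁+v₁,u₂+v₂} ⊕ ((u₀+v₀)⊗J⁰)` under the isomorphism `Φ`
(which sends `D_{u₁+v₁,u₂+v₂} ↦ (3,−1,−1,3)` and `(u₀+v₀)⊗x ↦ (0,x,x,0)`) is the
subalgebra `S = {(3α, −α+x, −α+x, 3α) : α ∈ k, x ∈ J⁰}` of `A(J)`, and the map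
`J → S`, `α1 + x ↦ ((3/4)α, −(1/4)α+(1/2)x, −(1/4)α+(1/2)x, (3/4)α)` is an
algebra isomorphism. -/
theorem quaternion_Tits_coordinate_algebra
    (k : Type*) [Field k] (hk2 : (2 : k) ≠ 0) (hk3 : (3 : k) ≠ 0)
    (J : Type*) [NonAssocRing J] [Module k J]
    [SMulCommClass k J J] [IsScalarTower k J J]
    (hcomm : ∀ x y : J, x * y = y * x)
    (hjordan : ∀ x y : J, ((x * x) * y) * x = (x * x) * (y * x))
    (tJ : J →ₗ[k] k) (h1 : tJ 1 = 1)
    (hassoc : ∀ x y z : J, tJ ((x * y) * z) = tJ (x * (y * z))) :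
    -- the image of `T(Q,J)_{(1̄,0̄)}` under `Φ` is `S`
    ({z : k × J × J × k | ∃ (c : k) (x : J), tJ x = 0 ∧
        z = c • (((3 : k), -(1 : J), -(1 : J), (3 : k)) : k × J × J × k)
              + (((0 : k), x, x, (0 : k)) : k × J × J × k)}
      = {z : k × J × J × k | ∃ (α : k) (x : J), tJ x = 0 ∧
          z = (3 * α, -(α • (1 : J)) + x, -(α • (1 : J)) + x, 3 * α)}) ∧
    -- `J → S` is an algebra isomorphism onto `S`
    (Function.Injective (fun p : J =>
        ((((3 : k) / 4) * tJ p,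
          (2 : k)⁻¹ • p - (((1 : k) / 4) * tJ p) • (1 : J) - (2 : k)⁻¹ • (tJ p • (1 : J)),
          (2 : k)⁻¹ • p - (((1 : k) / 4) * tJ p) • (1 : J) - (2 : k)⁻¹ • (tJ p • (1 : J)),
          ((3 : k) / 4) * tJ p) : k × J × J × k)) ∧
     Set.range (fun p : J =>
        ((((3 : k) / 4) * tJ p,
          (2 : k)⁻¹ • p - (((1 : k) / 4) * tJ p) • (1 : J) - (2 : k)⁻¹ • (tJ p • (1 : J)),
          (2 : k)⁻¹ • p - (((1 : k) / 4) * tJ p) • (1 : J) - (2 : k)⁻¹ • (tJ p • (1 : J)),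
          ((3 : k) / 4) * tJ p) : k × J × J × k))
      = {z : k × J × J × k | ∃ (α : k) (x : J), tJ x = 0 ∧
          z = (3 * α, -(α • (1 : J)) + x, -(α • (1 : J)) + x, 3 * α)} ∧
     ∀ p q : J,
       ((((3 : k) / 4) * tJ (p * q),
         (2 : k)⁻¹ • (p * q) - (((1 : k) / 4) * tJ (p * q)) • (1 : J)
           - (2 : k)⁻¹ • (tJ (p * q) • (1 : J)),
         (2 : k)⁻¹ • (p * q) - (((1 : k) / 4) * tJ (p * q)) • (1 : J)
           - (2 : k)⁻¹ • (tJ (p * q) • (1 : J)),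
         ((3 : k) / 4) * tJ (p * q)) : k × J × J × k)
       = aMul tJ
         (((3 : k) / 4 * tJ p,
           (2 : k)⁻¹ • p - (((1 : k) / 4) * tJ p) • (1 : J) - (2 : k)⁻¹ • (tJ p • (1 : J)),
           (2 : k)⁻¹ • p - (((1 : k) / 4) * tJ p) • (1 : J) - (2 : k)⁻¹ • (tJ p • (1 : J)),
           (3 : k) / 4 * tJ p))
         (((3 : k) / 4 * tJ q,
           (2 : k)⁻¹ • q - (((1 : k) / 4) * tJ q) • (1 : J) - (2 : k)⁻¹ • (tJ q • (1 : J)),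
           (2 : k)⁻¹ • q - (((1 : k) / 4) * tJ q) • (1 : J) - (2 : k)⁻¹ • (tJ q • (1 : J)),
           (3 : k) / 4 * tJ q))) := by
  have h4 : (4 : k) ≠ 0 := by
    have e : (4 : k) = 2 ^ 2 := by norm_num
    rw [e]; exact pow_ne_zero _ hk2
  have h8 : (8 : k) ≠ 0 := by
    have e : (8 : k) = 2 ^ 3 := by norm_num
    rw [e]; exact pow_ne_zero _ hk2
  have h16 : (16 : k) ≠ 0 := by
    have e : (16 : k) = 2 ^ 4 := by norm_num
    rw [e]; exact pow_ne_zero _ hk2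
  have h32 : (32 : k) ≠ 0 := by
    have e : (32 : k) = 2 ^ 5 := by norm_num
    rw [e]; exact pow_ne_zero _ hk2
  have h64 : (64 : k) ≠ 0 := by
    have e : (64 : k) = 2 ^ 6 := by norm_num
    rw [e]; exact pow_ne_zero _ hk2
  have h128 : (128 : k) ≠ 0 := by
    have e : (128 : k) = 2 ^ 7 := by norm_num
    rw [e]; exact pow_ne_zero _ hk2
  have h256 : (256 : k) ≠ 0 := by
    have e : (256 : k) = 2 ^ 8 := by norm_num
    rw [e]; exact pow_ne_zero _ hk2
  have h512 : (512 : k) ≠ 0 := by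
    have e : (512 : k) = 2 ^ 9 := by norm_num
    rw [e]; exact pow_ne_zero _ hk2
  have h1024 : (1024 : k) ≠ 0 := by
    have e : (1024 : k) = 2 ^ 10 := by norm_num
    rw [e]; exact pow_ne_zero _ hk2
  have h2048 : (2048 : k) ≠ 0 := by
    have e : (2048 : k) = 2 ^ 11 := by norm_num
    rw [e]; exact pow_ne_zero _ hk2
  have h4096 : (4096 : k) ≠ 0 := by
    have e : (4096 : k) = 2 ^ 12 := by norm_num
    rw [e]; exact pow_ne_zero _ hk2
  have h8192 : (8192 : k) ≠ 0 := by
    have e : (8192 : k) = 2 ^ 13 := by norm_num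
    rw [e]; exact pow_ne_zero _ hk2
  have h16384 : (16384 : k) ≠ 0 := by
    have e : (16384 : k) = 2 ^ 14 := by norm_num
    rw [e]; exact pow_ne_zero _ hk2
  have h32768 : (32768 : k) ≠ 0 := by
    have e : (32768 : k) = 2 ^ 15 := by norm_num
    rw [e]; exact pow_ne_zero _ hk2
  have h65536 : (65536 : k) ≠ 0 := by
    have e : (65536 : k) = 2 ^ 16 := by norm_num
    rw [e]; exact pow_ne_zero _ hk2
  have h131072 : (131072 : k) ≠ 0 := by
    have e : (131072 : k) = 2 ^ 17 := by norm_num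
    rw [e]; exact pow_ne_zero _ hk2
  have h262144 : (262144 : k) ≠ 0 := by
    have e : (262144 : k) = 2 ^ 18 := by norm_num
    rw [e]; exact pow_ne_zero _ hk2
  have h524288 : (524288 : k) ≠ 0 := by
    have e : (524288 : k) = 2 ^ 19 := by norm_num
    rw [e]; exact pow_ne_zero _ hk2
  have h1048576 : (1048576 : k) ≠ 0 := by
    have e : (1048576 : k) = 2 ^ 20 := by norm_num
    rw [e]; exact pow_ne_zero _ hk2
  have h2097152 : (2097152 : k) ≠ 0 := by
    have e : (2097152 : k) = 2 ^ 21 := by norm_num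
    rw [e]; exact pow_ne_zero _ hk2
  have h4194304 : (4194304 : k) ≠ 0 := by
    have e : (4194304 : k) = 2 ^ 22 := by norm_num
    rw [e]; exact pow_ne_zero _ hk2
  have h8388608 : (8388608 : k) ≠ 0 := by
    have e : (8388608 : k) = 2 ^ 23 := by norm_num
    rw [e]; exact pow_ne_zero _ hk2
  have h16777216 : (16777216 : k) ≠ 0 := by
    have e : (16777216 : k) = 2 ^ 24 := by norm_num
    rw [e]; exact pow_ne_zero _ hk2
  have key : ∀ x : J,
      (2 : k)⁻¹ • x - (((1 : k) / 4) * tJ x) • (1 : J) - (2 : k)⁻¹ • (tJ x • (1 : J))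
        = (2 : k)⁻¹ • x - (((3 : k) / 4) * tJ x) • (1 : J) := fun x => by
    match_scalars <;> (try field_simp; try ring)
  have hprod : ∀ (a b : k) (x y : J),
      ((2 : k)⁻¹ • x - a • (1 : J)) * ((2 : k)⁻¹ • y - b • (1 : J)) =
        ((2 : k)⁻¹ * (2 : k)⁻¹) • (x * y) - ((2 : k)⁻¹ * b) • x - ((2 : k)⁻¹ * a) • y
          + (a * b) • (1 : J) := by
    intro a b x y
    simp only [sub_mul, mul_sub, smul_mul_assoc, mul_smul_comm, smul_smul, one_mul, mul_one]
    match_scalars <;> (try field_simp; try ring)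
  refine ⟨?_, ?_, ?_, ?_⟩
  · ext z
    simp only [Set.mem_setOf_eq, Prod.smul_mk, Prod.mk_add_mk, smul_eq_mul, smul_neg,
      add_zero]
    constructor
    · rintro ⟨c, x, hx, rfl⟩
      exact ⟨c, x, hx, by rw [mul_comm]⟩
    · rintro ⟨α, x, hx, rfl⟩
      exact ⟨α, x, hx, by rw [mul_comm]⟩
  · intro p q h
    simp only [Prod.mk.injEq] at h
    obtain ⟨h1', h2', -, -⟩ := h
    have ht : tJ p = tJ q := by
      have h34 : (3 : k) / 4 ≠ 0 := div_ne_zero hk3 h4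
      exact mul_left_cancel₀ h34 h1'
    rw [key p, key q, ht] at h2'
    have h2'' : (2 : k)⁻¹ • p = (2 : k)⁻¹ • q := sub_left_inj.mp h2'
    have := congrArg (fun y : J => (2 : k) • y) h2''
    simpa [smul_smul, mul_inv_cancel₀ hk2] using this
  · ext z
    simp only [Set.mem_range, Set.mem_setOf_eq]
    constructor
    · rintro ⟨p, rfl⟩
      refine ⟨(1 : k) / 4 * tJ p, (2 : k)⁻¹ • p - (2 : k)⁻¹ • (tJ p • (1 : J)), ?_, ?_⟩
      · simp only [map_sub, map_smul, h1, smul_eq_mul, mul_one, sub_self]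
      · simp only [Prod.mk.injEq]
        refine ⟨by try field_simp; try ring, ?_, ?_, by try field_simp; try ring⟩ <;> module
    · rintro ⟨α, x, hx, rfl⟩
      refine ⟨(4 * α) • (1 : J) + (2 : k) • x, ?_⟩
      have htp : tJ ((4 * α) • (1 : J) + (2 : k) • x) = 4 * α := by
        simp [map_add, map_smul, h1, hx]
      simp only [htp, Prod.mk.injEq]
      refine ⟨by try field_simp; try ring, ?_, ?_, by try field_simp; try ring⟩ <;>
        · match_scalars <;> (try field_simp; try ring)
  · intro p q
    rw [key p, key q, key (p * q)]
    simp only [aMul, crossProd]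
    rw [hprod ((3 : k) / 4 * tJ p) ((3 : k) / 4 * tJ q) p q]
    simp only [map_add, map_sub, map_smul, h1, smul_eq_mul, mul_one, Prod.mk.injEq]
    refine ⟨by try field_simp [hk2, hk3, h4, h8, h16, h32, h64, h128, h256, h512, h1024, h2048, h4096, h8192, h16384, h32768, h65536, h131072, h262144, h524288, h1048576, h2097152, h4194304, h8388608, h16777216]; try ring_nf; try field_simp [hk2, hk3, h4, h8, h16, h32, h64, h128, h256, h512, h1024, h2048, h4096, h8192, h16384, h32768, h65536, h131072, h262144, h524288, h1048576, h2097152, h4194304, h8388608, h16777216]; try ring_nf; try field_simp [hk2, hk3, h4, h8, h16, h32, h64, h128, h256, h512, h1024, h2048, h4096, h8192, h16384, h32768, h65536, h131072, h262144, h524288, h1048576, h2097152, h4194304, h8388608, h16777216]; try ring, ?_, ?_, by try field_simp [hk2, hk3, h4, h8, h16, h32, h64, h128, h256, h512, h1024, h2048, h4096, h8192, h16384, h32768, h65536, h131072, h262144, h524288, h1048576, h2097152, h4194304, h8388608, h16777216]; try ring_nf; try field_simp [hk2, hk3, h4, h8, h16, h32, h64, h128, h256, h512, h1024, h2048, h4096,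 h8192, h16384, h32768, h65536, h131072, h262144, h524288, h1048576, h2097152, h4194304, h8388608, h16777216]; try ring_nf; try field_simp [hk2, hk3, h4, h8, h16, h32, h64, h128, h256, h512, h1024, h2048, h4096, h8192, h16384, h32768, h65536, h131072, h262144, h524288, h1048576, h2097152, h4194304, h8388608, h16777216]; try ring⟩ <;>
      · simp only [two_smul]
        match_scalars <;> (try field_simp [hk2, hk3, h4, h8, h16, h32, h64, h128, h256, h512, h1024, h2048, h4096, h8192, h16384, h32768, h65536, h131072, h262144, h524288, h1048576, h2097152, h4194304, h8388608, h16777216]; try ring_nf; try field_simp [hk2, hk3, h4, h8, h16, h32, h64, h128, h256, h512, h1024, h2048, h4096, h8192, h16384, h32768, h65536, h131072, h262144, h524288, h1048576, h2097152, h4194304, h8388608, h16777216]; try ring_nf; try field_simp [hk2, hk3, h4, h8, h16, h32, h64, h128, h256, h512, h1024, h2048, h4096, h8192, h16384, h32768, h65536, h131072, h262144, h524288, h1048576, h2097152, h4194304, h8388608, h16777216]; try ring)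
end

section
/- Let Ĉ be a unital composition algebra and J = H₃(Ĉ) the Jordan algebra of 3×3 hermitian matrices over Ĉ with product X∘Y = (1/2)(XY+YX). The maps τ₁, τ₂, φ, τ given by: τ₁ fixes eᵢ and ι₀(x), negates ι₁(x), ι₂(x); τ₂ fixes eᵢ and ι₁(x), negates ι₀(x), ι₂(x); φ sends eᵢ↦e_{i+1}, ιᵢ(x)↦ι_{i+1}(x); τ fixes e₀, swaps e₁↔e₂, and sends ι₀(x)↦ι₀(x̄), ι₁(x)↦ι₂(x̄), ι₂(x)↦ι₁(x̄), define an embedding of the symmetric group S₄ into Aut(J). -/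
/-- The canonical involution `x ↦ t(x)·1 − x` of a unital composition algebra
with trace `t`. -/
def compConj {k : Type*} [Field k] {Ch : Type*} [NonAssocRing Ch] [Module k Ch]
    (t : Ch →ₗ[k] k) (x : Ch) : Ch := t x • (1 : Ch) - x

set_option linter.unusedSectionVars false

namespace S4E

/-! ### Combinatorial part -/

abbrev D3 := (ZMod 3 → ZMod 3) × (ZMod 3 → Bool) × Bool

def vperm : ZMod 3 → Equiv.Perm (Fin 4) := fun i =>
  if i = 0 then Equiv.swap 0 1 * Equiv.swap 2 3
  else if i = 1 then Equiv.swap 0 3 * Equiv.swap 1 2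
  else Equiv.swap 0 2 * Equiv.swap 1 3

def pidx (σ : Equiv.Perm (Fin 4)) (i : ZMod 3) : ZMod 3 :=
  let a := σ (vperm i (σ⁻¹ 0))
  if a = 1 then 0 else if a = 3 then 1 else 2

def dsgn (σ : Equiv.Perm (Fin 4)) (i : ZMod 3) : Bool :=
  !(decide (σ 3 = 3 ∨ σ 3 = vperm (pidx σ i) 3))

def dbit (σ : Equiv.Perm (Fin 4)) : Bool := !(decide (pidx σ 1 = pidx σ 0 + 1))

def eff (σ : Equiv.Perm (Fin 4)) (i : ZMod 3) : Bool := dsgn σ⁻¹ (pidx σ i)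

def dmap (σ : Equiv.Perm (Fin 4)) : D3 := (pidx σ, dsgn σ, dbit σ)

def dmul (a b : D3) : D3 :=
  (a.1 ∘ b.1, fun i => xor (b.2.1 i) (a.2.1 (b.1 i)), xor a.2.2 b.2.2)

set_option maxRecDepth 100000 in
set_option maxHeartbeats 4000000 in
theorem dmap_mul : ∀ a b : Equiv.Perm (Fin 4), dmap (a*b) = dmul (dmap a) (dmap b) := by
  decide

set_option maxRecDepth 100000 in
theorem dmap_one : dmap 1 = (id, fun _ => false, false) := by decide

set_option maxRecDepth 100000 in
set_option maxHeartbeats 1000000 in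
theorem pidx_linv : ∀ σ : Equiv.Perm (Fin 4), ∀ i, pidx σ⁻¹ (pidx σ i) = i := by decide

set_option maxRecDepth 100000 in
set_option maxHeartbeats 1000000 in
theorem dmap_good : ∀ σ : Equiv.Perm (Fin 4),
    ((∀ i, pidx σ (i+1) = pidx σ i + 1) ∧ dbit σ⁻¹ = false) ∨
    ((∀ i, pidx σ (i+1) = pidx σ i + 2) ∧ dbit σ⁻¹ = true) := by decide

set_option maxRecDepth 100000 in
set_option maxHeartbeats 1000000 in
theorem eff_good : ∀ σ : Equiv.Perm (Fin 4), ∀ i,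
    eff σ (i+2) = xor (eff σ i) (eff σ (i+1)) := by decide

set_option maxRecDepth 100000 in
set_option maxHeartbeats 4000000 in
theorem dmap_inj : ∀ σ τ : Equiv.Perm (Fin 4),
    (∀ i, pidx σ i = pidx τ i) → (∀ i, eff σ i = eff τ i) → σ = τ := by decide

set_option maxRecDepth 100000 in
set_option maxHeartbeats 1000000 in
theorem gen_tau1 : (∀ i, pidx (Equiv.swap (0:Fin 4) 1 * Equiv.swap 2 3) i = i) ∧
    dbit (Equiv.swap (0:Fin 4) 1 * Equiv.swap 2 3)⁻¹ = false ∧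
    eff (Equiv.swap (0:Fin 4) 1 * Equiv.swap 2 3) 0 = false ∧
    eff (Equiv.swap (0:Fin 4) 1 * Equiv.swap 2 3) 1 = true ∧
    eff (Equiv.swap (0:Fin 4) 1 * Equiv.swap 2 3) 2 = true := by decide

set_option maxRecDepth 100000 in
set_option maxHeartbeats 1000000 in
theorem gen_tau2 : (∀ i, pidx (Equiv.swap (1:Fin 4) 2 * Equiv.swap 0 3) i = i) ∧
    dbit (Equiv.swap (1:Fin 4) 2 * Equiv.swap 0 3)⁻¹ = false ∧
    eff (Equiv.swap (1:Fin 4) 2 * Equiv.swap 0 3) 0 = true ∧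
    eff (Equiv.swap (1:Fin 4) 2 * Equiv.swap 0 3) 1 = false ∧
    eff (Equiv.swap (1:Fin 4) 2 * Equiv.swap 0 3) 2 = true := by decide

set_option maxRecDepth 100000 in
set_option maxHeartbeats 1000000 in
theorem gen_phi : (∀ i, pidx (Equiv.swap (0:Fin 4) 2 * Equiv.swap 0 1) i = i + 1) ∧
    dbit (Equiv.swap (0:Fin 4) 2 * Equiv.swap 0 1)⁻¹ = false ∧
    (∀ i, eff (Equiv.swap (0:Fin 4) 2 * Equiv.swap 0 1) i = false) := by decide

set_option maxRecDepth 100000 in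
set_option maxHeartbeats 1000000 in
theorem gen_tau : pidx (Equiv.swap (0:Fin 4) 1) 0 = 0 ∧
    pidx (Equiv.swap (0:Fin 4) 1) 1 = 2 ∧ pidx (Equiv.swap (0:Fin 4) 1) 2 = 1 ∧
    dbit (Equiv.swap (0:Fin 4) 1)⁻¹ = true ∧
    (∀ i, eff (Equiv.swap (0:Fin 4) 1) i = false) := by decide

theorem zmod3_tri : ∀ i j : ZMod 3, i = j ∨ i = j + 1 ∨ i = j + 2 := by decide
theorem z11 : ∀ a : ZMod 3, a + 1 + 1 = a + 2 := by decide
theorem z21 : ∀ a : ZMod 3, a + 2 + 1 = a := by decide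
theorem z22 : ∀ a : ZMod 3, a + 2 + 2 = a + 1 := by decide
theorem z12 : ∀ a : ZMod 3, a + 1 + 2 = a := by decide
end S4E


namespace S4E
variable {k : Type*} [Field k] {Ch : Type*} [NonAssocRing Ch] [Module k Ch]
  [SMulCommClass k Ch Ch] [IsScalarTower k Ch Ch]

theorem Bapp (n : QuadraticForm k Ch) (a b : Ch) :
    QuadraticMap.polarBilin n a b = n (a + b) - n a - n b := by
  simp [QuadraticMap.polarBilin_apply_apply, QuadraticMap.polar]

theorem Bsymm (n : QuadraticForm k Ch) (a b : Ch) :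
    QuadraticMap.polarBilin n a b = QuadraticMap.polarBilin n b a := by
  rw [Bapp, Bapp, add_comm a b]; ring

theorem n_one (n : QuadraticForm k Ch) (t : Ch →ₗ[k] k)
    (ht : ∀ a : Ch, t a = n (a + 1) - n a - 1) : n (1 : Ch) = 1 := by
  have h := ht 0
  simp only [map_zero, zero_add] at h
  linear_combination -h

theorem tB (n : QuadraticForm k Ch) (t : Ch →ₗ[k] k)
    (ht : ∀ a : Ch, t a = n (a + 1) - n a - 1) (a : Ch) :
    t a = QuadraticMap.polarBilin n a 1 := by
  rw [Bapp, ht a, n_one n t ht]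

theorem tB' (n : QuadraticForm k Ch) (t : Ch →ₗ[k] k)
    (ht : ∀ a : Ch, t a = n (a + 1) - n a - 1) (a : Ch) :
    t a = QuadraticMap.polarBilin n (1:Ch) a := by rw [tB n t ht, Bsymm]

theorem t_one (n : QuadraticForm k Ch) (t : Ch →ₗ[k] k)
    (ht : ∀ a : Ch, t a = n (a + 1) - n a - 1) : t (1 : Ch) = 2 := by
  have h := ht 1
  have h2 : (1 : Ch) + 1 = (2 : k) • (1 : Ch) := by rw [two_smul]
  rw [h2, QuadraticMap.map_smul, n_one n t ht] at h
  rw [h]; norm_num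

theorem conj_conj (n : QuadraticForm k Ch) (t : Ch →ₗ[k] k)
    (ht : ∀ a : Ch, t a = n (a + 1) - n a - 1) (x : Ch) :
    compConj t (compConj t x) = x := by
  unfold compConj
  rw [map_sub, map_smul, t_one n t ht, smul_eq_mul, sub_smul, mul_smul,
    two_smul k (1:Ch), smul_add]
  abel

theorem conj_one (n : QuadraticForm k Ch) (t : Ch →ₗ[k] k)
    (ht : ∀ a : Ch, t a = n (a + 1) - n a - 1) : compConj t (1 : Ch) = 1 := by
  unfold compConj; rw [t_one n t ht, two_smul k (1:Ch)]; abel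

theorem t_conj (n : QuadraticForm k Ch) (t : Ch →ₗ[k] k)
    (ht : ∀ a : Ch, t a = n (a + 1) - n a - 1) (x : Ch) :
    t (compConj t x) = t x := by
  unfold compConj; rw [map_sub, map_smul, t_one n t ht, smul_eq_mul]; ring

theorem conj_zero (t : Ch →ₗ[k] k) : compConj t (0 : Ch) = 0 := by simp [compConj]

theorem conj_neg (t : Ch →ₗ[k] k) (x : Ch) : compConj t (-x) = - compConj t x := by
  simp [compConj, neg_smul]; abel

theorem t_conjl (t : Ch →ₗ[k] k) (x y : Ch) :
    t (compConj t x * y) = t x * t y - t (x * y) := by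
  unfold compConj
  rw [sub_mul, smul_mul_assoc, one_mul, map_sub, map_smul, smul_eq_mul]

theorem t_conjr (t : Ch →ₗ[k] k) (x y : Ch) :
    t (x * compConj t y) = t y * t x - t (x * y) := by
  unfold compConj
  rw [mul_sub, mul_smul_comm, mul_one, map_sub, map_smul, smul_eq_mul]

theorem t_conj_swap (t : Ch →ₗ[k] k) (x y : Ch) :
    t (compConj t x * y) = t (x * compConj t y) := by
  rw [t_conjl, t_conjr, mul_comm]

theorem I1 (n : QuadraticForm k Ch) (hnmul : ∀ a b : Ch, n (a * b) = n a * n b)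
    (a c b : Ch) :
    QuadraticMap.polarBilin n (a*b) (c*b) = QuadraticMap.polarBilin n a c * n b := by
  rw [Bapp, Bapp, ← add_mul, hnmul, hnmul, hnmul]; ring

theorem I2 (n : QuadraticForm k Ch) (hnmul : ∀ a b : Ch, n (a * b) = n a * n b)
    (a b c d : Ch) :
    QuadraticMap.polarBilin n (a*b) (c*d) + QuadraticMap.polarBilin n (a*d) (c*b)
      = QuadraticMap.polarBilin n a c * QuadraticMap.polarBilin n b d := by
  have h := I1 n hnmul a c (b + d)
  rw [mul_add, mul_add] at h
  simp only [map_add, LinearMap.add_apply] at h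
  rw [I1 n hnmul a c b, I1 n hnmul a c d] at h
  have hb := Bapp n b d
  linear_combination h - (QuadraticMap.polarBilin n a) c * hb

theorem I3 (n : QuadraticForm k Ch) (t : Ch →ₗ[k] k)
    (hnmul : ∀ a b : Ch, n (a * b) = n a * n b)
    (ht : ∀ a : Ch, t a = n (a + 1) - n a - 1) (a b c : Ch) :
    QuadraticMap.polarBilin n (a*b) c + QuadraticMap.polarBilin n a (c*b)
      = t b * QuadraticMap.polarBilin n a c := by
  have h := I2 n hnmul a b c 1
  rw [mul_one, mul_one] at h
  have hb := tB n t ht b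
  linear_combination h - (QuadraticMap.polarBilin n a) c * hb

theorem I3l (n : QuadraticForm k Ch) (t : Ch →ₗ[k] k)
    (hnmul : ∀ a b : Ch, n (a * b) = n a * n b)
    (ht : ∀ a : Ch, t a = n (a + 1) - n a - 1) (b c d : Ch) :
    QuadraticMap.polarBilin n b (c*d) + QuadraticMap.polarBilin n d (c*b)
      = t c * QuadraticMap.polarBilin n b d := by
  have h := I2 n hnmul 1 b c d
  rw [one_mul, one_mul] at h
  have hb := tB' n t ht c
  linear_combination h - (QuadraticMap.polarBilin n b) d * hb

theorem hBab (n : QuadraticForm k Ch) (t : Ch →ₗ[k] k)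
    (hnmul : ∀ a b : Ch, n (a * b) = n a * n b)
    (ht : ∀ a : Ch, t a = n (a + 1) - n a - 1) (a b : Ch) :
    QuadraticMap.polarBilin n a b = t a * t b - t (a * b) := by
  have h1 := t_conjr t a b
  have h2 := I3 n t hnmul ht a (compConj t b) 1
  rw [one_mul] at h2
  have h3 := t_conj n t ht b
  have h4 : QuadraticMap.polarBilin n a (compConj t b)
      = t b * QuadraticMap.polarBilin n a 1 - QuadraticMap.polarBilin n a b := by
    unfold compConj
    rw [map_sub, map_smul, smul_eq_mul]
  have h5 := tB n t ht (a * compConj t b)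
  have h6 := tB n t ht a
  linear_combination h1 + h4 - h2 - (QuadraticMap.polarBilin n a) 1 * h3 - h5

theorem t_mul_comm (n : QuadraticForm k Ch) (t : Ch →ₗ[k] k)
    (hnmul : ∀ a b : Ch, n (a * b) = n a * n b)
    (ht : ∀ a : Ch, t a = n (a + 1) - n a - 1) (a b : Ch) :
    t (a * b) = t (b * a) := by
  have h1 := hBab n t hnmul ht a b
  have h2 := hBab n t hnmul ht b a
  have h3 := Bsymm n a b
  linear_combination h1 - h2 - h3

theorem key2 (n : QuadraticForm k Ch) (t : Ch →ₗ[k] k)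
    (hnmul : ∀ a b : Ch, n (a * b) = n a * n b)
    (ht : ∀ a : Ch, t a = n (a + 1) - n a - 1)
    (hnondeg : (QuadraticMap.polarBilin n).Nondegenerate) (a b : Ch) :
    a*b + b*a = t (a*b) • (1:Ch) - (t a * t b) • (1:Ch) + t b • a + t a • b := by
  have hnd : ∀ m : Ch, (∀ z : Ch, QuadraticMap.polarBilin n m z = 0) → m = 0 :=
    fun m h => hnondeg.1 m h
  rw [← sub_eq_zero]
  apply hnd
  intro z
  have e1 := I3 n t hnmul ht a b z
  have e2 := I3 n t hnmul ht b a z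
  have e3 := I3l n t hnmul ht a z b
  have e4 := hBab n t hnmul ht a b
  have e5 := (tB' n t ht z).symm
  simp only [map_sub, map_add, map_smul, LinearMap.sub_apply, LinearMap.add_apply,
    LinearMap.smul_apply, smul_eq_mul]
  linear_combination e1 + e2 - e3 - t z * e4 + (t a * t b - t (a*b)) * e5

theorem conj_mul (n : QuadraticForm k Ch) (t : Ch →ₗ[k] k)
    (hnmul : ∀ a b : Ch, n (a * b) = n a * n b)
    (ht : ∀ a : Ch, t a = n (a + 1) - n a - 1)
    (hnondeg : (QuadraticMap.polarBilin n).Nondegenerate) (a b : Ch) :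
    compConj t (a * b) = compConj t b * compConj t a := by
  have h := key2 n t hnmul ht hnondeg a b
  unfold compConj
  rw [sub_mul, mul_sub, mul_sub, smul_mul_assoc, one_mul, mul_smul_comm, mul_one,
    smul_mul_assoc, one_mul, smul_smul]
  linear_combination (norm := module) -h

theorem conj_mul' (n : QuadraticForm k Ch) (t : Ch →ₗ[k] k)
    (hnmul : ∀ a b : Ch, n (a * b) = n a * n b)
    (ht : ∀ a : Ch, t a = n (a + 1) - n a - 1)
    (hnondeg : (QuadraticMap.polarBilin n).Nondegenerate) (a b : Ch) :
    compConj t (compConj t b * compConj t a) = a * b := by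
  rw [← conj_mul n t hnmul ht hnondeg, conj_conj n t ht]

end S4E



namespace S4E
variable {k : Type*} [Field k] {Ch : Type*} [NonAssocRing Ch] [Module k Ch]
  [SMulCommClass k Ch Ch] [IsScalarTower k Ch Ch]

theorem conj_add (t : Ch →ₗ[k] k) (x y : Ch) :
    compConj t (x + y) = compConj t x + compConj t y := by
  simp only [compConj, map_add, add_smul]; abel

theorem conj_smul (t : Ch →ₗ[k] k) (c : k) (x : Ch) :
    compConj t (c • x) = c • compConj t x := by
  simp only [compConj, map_smul, smul_eq_mul, mul_smul, smul_sub]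

/-- conditional conjugation -/
def condC (t : Ch →ₗ[k] k) (b : Bool) (x : Ch) : Ch := cond b (compConj t x) x

/-- conditional negation -/
def condN (b : Bool) (x : Ch) : Ch := cond b (-x) x

theorem condC_add (t : Ch →ₗ[k] k) (b : Bool) (x y : Ch) :
    condC t b (x + y) = condC t b x + condC t b y := by
  cases b <;> simp [condC, conj_add]

theorem condC_smul (t : Ch →ₗ[k] k) (b : Bool) (c : k) (x : Ch) :
    condC t b (c • x) = c • condC t b x := by
  cases b <;> simp [condC, conj_smul]

theorem condC_zero (t : Ch →ₗ[k] k) (b : Bool) : condC t b (0 : Ch) = 0 := by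
  cases b <;> simp [condC, conj_zero]

theorem condN_add (b : Bool) (x y : Ch) : condN b (x + y) = condN b x + condN b y := by
  cases b <;> simp [condN]; abel

theorem condN_smul (b : Bool) (c : k) (x : Ch) : condN b (c • x) = c • condN b x := by
  cases b <;> simp [condN]

theorem condN_zero (b : Bool) : condN b (0 : Ch) = 0 := by cases b <;> simp [condN]

/-- The model action of the data `g : D3` on `(ZMod 3 → k) × (ZMod 3 → Ch)`. -/
def WmapL (t : Ch →ₗ[k] k) (g : D3) :
    ((ZMod 3 → k) × (ZMod 3 → Ch)) →ₗ[k] ((ZMod 3 → k) × (ZMod 3 → Ch)) where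
  toFun p := (fun i => p.1 (g.1 i), fun i => condN (g.2.1 i) (condC t g.2.2 (p.2 (g.1 i))))
  map_add' p q := by
    refine Prod.ext ?_ ?_ <;> funext i <;>
      simp [condN_add, condC_add]
  map_smul' c p := by
    refine Prod.ext ?_ ?_ <;> funext i <;>
      simp [condN_smul, condC_smul]

variable {J : Type*} [NonUnitalNonAssocRing J] [Module k J]

/-- The parametrization of `J` by coordinates. -/
def toJL (e : ZMod 3 → J) (ι : ZMod 3 → Ch → J) (hιlin : ∀ i, IsLinearMap k (ι i)) :
    ((ZMod 3 → k) × (ZMod 3 → Ch)) →ₗ[k] J where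
  toFun p := (∑ i, p.1 i • e i) + ∑ i, ι i (p.2 i)
  map_add' p q := by
    simp only [Prod.fst_add, Prod.snd_add, Pi.add_apply, add_smul, (hιlin _).map_add,
      Finset.sum_add_distrib]
    abel
  map_smul' c p := by
    simp only [Prod.smul_fst, Prod.smul_snd, Pi.smul_apply, RingHom.id_apply, smul_smul,
      (hιlin _).map_smul, Finset.smul_sum, smul_add]
    simp [mul_smul]

end S4E


open S4E in
set_option maxHeartbeats 1000000 in
/-- Let `Ĉ` be a unital composition algebra and `J = H₃(Ĉ)` the
Jordan algebra of `3×3` hermitian matrices over `Ĉ`.  The maps `τ₁, τ₂, φ, τ`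
described in the paper (acting on the diagonal idempotents `eᵢ` and the
off-diagonal elements `ιᵢ(x)`) define an embedding of the symmetric group `S₄`
into `Aut(J)`. -/
theorem hermitianJordan_S4_embedding
    (k : Type*) [Field k] (hk2 : (2 : k) ≠ 0) (hk3 : (3 : k) ≠ 0)
    (Ch : Type*) [NonAssocRing Ch] [Module k Ch]
    [SMulCommClass k Ch Ch] [IsScalarTower k Ch Ch] [FiniteDimensional k Ch]
    (n : QuadraticForm k Ch)
    (hnondeg : (QuadraticMap.polarBilin n).Nondegenerate)
    (hnmul : ∀ a b : Ch, n (a * b) = n a * n b)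
    (t : Ch →ₗ[k] k) (ht : ∀ a : Ch, t a = n (a + 1) - n a - 1)
    -- `J = H₃(Ĉ)` given through its basis `e₀,e₁,e₂, ιᵢ(x)` and multiplication table
    (J : Type*) [NonUnitalNonAssocRing J] [Module k J]
    [SMulCommClass k J J] [IsScalarTower k J J]
    (e : ZMod 3 → J) (ι : ZMod 3 → Ch → J)
    (hιlin : ∀ i, IsLinearMap k (ι i))
    (hcomm : ∀ a b : J, a * b = b * a)
    (hee : ∀ i j, e i * e j = if i = j then e i else 0)
    (heι1 : ∀ i x, e (i + 1) * ι i x = (2 : k)⁻¹ • ι i x)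
    (heι2 : ∀ i x, e (i + 2) * ι i x = (2 : k)⁻¹ • ι i x)
    (heι0 : ∀ i x, e i * ι i x = 0)
    (hιι : ∀ i x y, ι i x * ι (i + 1) y = (2 : k)⁻¹ • ι (i + 2) (compConj t (x * y)))
    (hιιs : ∀ i x y,
      ι i x * ι i y = ((2 : k)⁻¹ * t (x * compConj t y)) • (e (i + 1) + e (i + 2)))
    (hspanJ : ∀ p : J, ∃ (c : ZMod 3 → k) (z : ZMod 3 → Ch),
      p = (∑ i, c i • e i) + ∑ i, ι i (z i))
    (hindepJ : ∀ (c : ZMod 3 → k) (z : ZMod 3 → Ch),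
      (∑ i, c i • e i) + (∑ i, ι i (z i)) = 0 → (∀ i, c i = 0) ∧ (∀ i, z i = 0)) :
    ∃ ρ : Equiv.Perm (Fin 4) →* (J ≃ₗ[k] J),
      Function.Injective ρ ∧
      (∀ σ : Equiv.Perm (Fin 4), ∀ a b : J, ρ σ (a * b) = ρ σ a * ρ σ b) ∧
      -- τ₁ = (12)(34)
      ((∀ i, ρ (Equiv.swap (0 : Fin 4) 1 * Equiv.swap 2 3) (e i) = e i) ∧
       (∀ x, ρ (Equiv.swap (0 : Fin 4) 1 * Equiv.swap 2 3) (ι 0 x) = ι 0 x) ∧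
       (∀ x, ρ (Equiv.swap (0 : Fin 4) 1 * Equiv.swap 2 3) (ι 1 x) = - ι 1 x) ∧
       (∀ x, ρ (Equiv.swap (0 : Fin 4) 1 * Equiv.swap 2 3) (ι 2 x) = - ι 2 x)) ∧
      -- τ₂ = (23)(14)
      ((∀ i, ρ (Equiv.swap (1 : Fin 4) 2 * Equiv.swap 0 3) (e i) = e i) ∧
       (∀ x, ρ (Equiv.swap (1 : Fin 4) 2 * Equiv.swap 0 3) (ι 0 x) = - ι 0 x) ∧
       (∀ x, ρ (Equiv.swap (1 : Fin 4) 2 * Equiv.swap 0 3) (ι 1 x) = ι 1 x) ∧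
       (∀ x, ρ (Equiv.swap (1 : Fin 4) 2 * Equiv.swap 0 3) (ι 2 x) = - ι 2 x)) ∧
      -- φ = (123)
      ((∀ i, ρ (Equiv.swap (0 : Fin 4) 2 * Equiv.swap 0 1) (e i) = e (i + 1)) ∧
       (∀ i x, ρ (Equiv.swap (0 : Fin 4) 2 * Equiv.swap 0 1) (ι i x) = ι (i + 1) x)) ∧
      -- τ = (12)
      (ρ (Equiv.swap (0 : Fin 4) 1) (e 0) = e 0 ∧
       ρ (Equiv.swap (0 : Fin 4) 1) (e 1) = e 2 ∧
       ρ (Equiv.swap (0 : Fin 4) 1) (e 2) = e 1 ∧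
       (∀ x, ρ (Equiv.swap (0 : Fin 4) 1) (ι 0 x) = ι 0 (compConj t x)) ∧
       (∀ x, ρ (Equiv.swap (0 : Fin 4) 1) (ι 1 x) = ι 2 (compConj t x)) ∧
       (∀ x, ρ (Equiv.swap (0 : Fin 4) 1) (ι 2 x) = ι 1 (compConj t x))) := by
  classical
  -- composition algebra facts
  have hcc : ∀ x : Ch, compConj t (compConj t x) = x := conj_conj n t ht
  have hc1 : compConj t (1:Ch) = 1 := conj_one n t ht
  have hcm' : ∀ a b : Ch, compConj t (compConj t b * compConj t a) = a * b :=
    conj_mul' n t hnmul ht hnondeg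
  have hts : ∀ x y : Ch, t (compConj t x * y) = t (x * compConj t y) := t_conj_swap t
  have ht1 : t (1:Ch) = 2 := t_one n t ht
  -- the coordinate parametrization of J
  let toJ : ((ZMod 3 → k) × (ZMod 3 → Ch)) →ₗ[k] J := toJL e ι hιlin
  have htoJ : ∀ p, toJ p = (∑ i, p.1 i • e i) + ∑ i, ι i (p.2 i) := fun _ => rfl
  have hinj : Function.Injective toJ := by
    intro p q hpq
    have h0 : toJ (p - q) = 0 := by rw [map_sub, hpq, sub_self]
    rw [htoJ] at h0
    have h1 := hindepJ (fun i => p.1 i - q.1 i) (fun i => p.2 i - q.2 i) (by exact h0)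
    obtain ⟨hc, hz⟩ := h1
    refine Prod.ext ?_ ?_ <;> funext i
    · exact sub_eq_zero.mp (hc i)
    · exact sub_eq_zero.mp (hz i)
  have hsurj : Function.Surjective toJ := by
    intro q
    obtain ⟨c, z, hq⟩ := hspanJ q
    exact ⟨(c, z), hq.symm⟩
  let toJe : ((ZMod 3 → k) × (ZMod 3 → Ch)) ≃ₗ[k] J :=
    LinearEquiv.ofBijective toJ ⟨hinj, hsurj⟩
  have hsymm : ∀ p, toJe.symm (toJ p) = p := fun p => toJe.symm_apply_apply p
  have happ : ∀ q, toJ (toJe.symm q) = q := fun q => toJe.apply_symm_apply q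
  -- composition law of the model action
  have hNC : ∀ (s1 b1 s2 b2 : Bool) (v : Ch),
      condN s1 (condC t b1 (condN s2 (condC t b2 v)))
        = condN (xor s1 s2) (condC t (xor b1 b2) v) := by
    intro s1 b1 s2 b2 v
    cases s1 <;> cases b1 <;> cases s2 <;> cases b2 <;>
      simp [condN, condC, conj_neg, hcc]
  have hWapp : ∀ (g : D3) p, WmapL t g p
      = (fun i => p.1 (g.1 i), fun i => condN (g.2.1 i) (condC t g.2.2 (p.2 (g.1 i)))) :=
    fun _ _ => rfl
  have hWc : ∀ (g h : D3) p, WmapL t g (WmapL t h p) = WmapL t (dmul h g) p := by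
    intro g h p
    rw [hWapp, hWapp, hWapp]
    refine Prod.ext rfl ?_
    funext i
    show condN (g.2.1 i) (condC t g.2.2 (condN (h.2.1 (g.1 i)) (condC t h.2.2 (p.2 (h.1 (g.1 i))))))
      = condN (xor (g.2.1 i) (h.2.1 (g.1 i))) (condC t (xor h.2.2 g.2.2) (p.2 (h.1 (g.1 i))))
    rw [hNC, Bool.xor_comm g.2.2 h.2.2]
  have hWid : ∀ p, WmapL t (dmap 1) p = p := by
    intro p
    rw [dmap_one, hWapp]
    exact Prod.ext rfl rfl
  -- the automorphisms
  let FJ : Equiv.Perm (Fin 4) → (J →ₗ[k] J) := fun σ =>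
    toJ.comp ((WmapL t (dmap σ⁻¹)).comp toJe.symm.toLinearMap)
  have hFJapp : ∀ σ q, FJ σ q = toJ (WmapL t (dmap σ⁻¹) (toJe.symm q)) := fun _ _ => rfl
  have hFJcomp : ∀ σ τ q, FJ σ (FJ τ q) = FJ (σ * τ) q := by
    intro σ τ q
    rw [hFJapp, hFJapp, hFJapp, hsymm, hWc, ← dmap_mul, ← mul_inv_rev]
  have hFJ1 : ∀ q, FJ 1 q = q := by
    intro q; rw [hFJapp, inv_one, hWid, happ]
  let ρfun : Equiv.Perm (Fin 4) → (J ≃ₗ[k] J) := fun σ =>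
    LinearEquiv.ofLinear (FJ σ) (FJ σ⁻¹)
      (LinearMap.ext fun q => by
        simp only [LinearMap.comp_apply, LinearMap.id_apply]
        rw [hFJcomp, mul_inv_cancel]; exact hFJ1 q)
      (LinearMap.ext fun q => by
        simp only [LinearMap.comp_apply, LinearMap.id_apply]
        rw [hFJcomp, inv_mul_cancel]; exact hFJ1 q)
  have hρapp : ∀ σ q, ρfun σ q = FJ σ q := fun _ _ => rfl
  let ρ : Equiv.Perm (Fin 4) →* (J ≃ₗ[k] J) := MonoidHom.mk' ρfun (by
    intro σ τ
    apply LinearEquiv.ext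
    intro q
    show FJ (σ * τ) q = (ρfun σ) ((ρfun τ) q)
    rw [hρapp, hρapp, hFJcomp])
  have hρ : ∀ σ q, ρ σ q = FJ σ q := fun _ _ => rfl
  -- basis vectors
  have hrinv : ∀ (σ : Equiv.Perm (Fin 4)) j, pidx σ (pidx σ⁻¹ j) = j := by
    intro σ j
    have h := pidx_linv σ⁻¹ j
    rwa [inv_inv] at h
  let Eb : ZMod 3 → ((ZMod 3 → k) × (ZMod 3 → Ch)) :=
    fun i => (fun j => if j = i then (1:k) else 0, 0)
  let Ib : ZMod 3 → Ch → ((ZMod 3 → k) × (ZMod 3 → Ch)) :=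
    fun i x => (0, fun j => if j = i then x else 0)
  have htoJEb : ∀ i, toJ (Eb i) = e i := by
    intro i
    rw [htoJ]
    have h1 : (∑ j, (if j = i then (1:k) else 0) • e j) = e i := by
      simp [ite_smul]
    have h2 : (∑ j : ZMod 3, ι j ((0 : ZMod 3 → Ch) j)) = 0 :=
      Finset.sum_eq_zero fun j _ => (hιlin j).map_zero
    show (∑ j, (if j = i then (1:k) else 0) • e j) + (∑ j : ZMod 3, ι j ((0 : ZMod 3 → Ch) j)) = e i
    rw [h1, h2, add_zero]
  have htoJIb : ∀ i x, toJ (Ib i x) = ι i x := by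
    intro i x
    rw [htoJ]
    have h1 : (∑ j : ZMod 3, ((0 : ZMod 3 → k) j) • e j) = 0 := by simp
    have h2 : (∑ j, ι j (if j = i then x else 0)) = ι i x := by
      rw [Finset.sum_eq_single i]
      · rw [if_pos rfl]
      · intro j _ hj
        rw [if_neg hj]
        exact (hιlin j).map_zero
      · intro h; exact absurd (Finset.mem_univ i) h
    show (∑ j : ZMod 3, ((0 : ZMod 3 → k) j) • e j) + (∑ j, ι j (if j = i then x else 0)) = ι i x
    rw [h1, h2, zero_add]
  have hWEb : ∀ (σ : Equiv.Perm (Fin 4)) i,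
      WmapL t (dmap σ⁻¹) (Eb i) = Eb (pidx σ i) := by
    intro σ i
    rw [hWapp]
    refine Prod.ext ?_ ?_
    · funext j
      show (if pidx σ⁻¹ j = i then (1:k) else 0) = if j = pidx σ i then 1 else 0
      by_cases hj : j = pidx σ i
      · rw [if_pos hj, if_pos (by rw [hj, pidx_linv])]
      · rw [if_neg hj, if_neg (fun h => hj (by rw [← h, hrinv]))]
    · funext j
      show condN (dsgn σ⁻¹ j) (condC t (dbit σ⁻¹) (0:Ch)) = 0
      rw [condC_zero, condN_zero]
  have hWIb : ∀ (σ : Equiv.Perm (Fin 4)) i x,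
      WmapL t (dmap σ⁻¹) (Ib i x)
        = Ib (pidx σ i) (condN (eff σ i) (condC t (dbit σ⁻¹) x)) := by
    intro σ i x
    rw [hWapp]
    refine Prod.ext rfl ?_
    funext j
    show condN (dsgn σ⁻¹ j) (condC t (dbit σ⁻¹) (if pidx σ⁻¹ j = i then x else 0))
      = if j = pidx σ i then condN (eff σ i) (condC t (dbit σ⁻¹) x) else 0
    by_cases hj : j = pidx σ i
    · subst hj
      rw [if_pos (pidx_linv σ i), if_pos rfl]
      rfl
    · rw [if_neg (fun h => hj (by rw [← h, hrinv])), if_neg hj, condC_zero, condN_zero]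
  have hRe : ∀ (σ : Equiv.Perm (Fin 4)) i, ρ σ (e i) = e (pidx σ i) := by
    intro σ i
    rw [hρ, hFJapp, show toJe.symm (e i) = Eb i from by rw [← htoJEb i]; exact hsymm (Eb i),
      hWEb, htoJEb]
  have hRι : ∀ (σ : Equiv.Perm (Fin 4)) i x,
      ρ σ (ι i x) = ι (pidx σ i) (condN (eff σ i) (condC t (dbit σ⁻¹) x)) := by
    intro σ i x
    rw [hρ, hFJapp, show toJe.symm (ι i x) = Ib i x from by rw [← htoJIb i x]; exact hsymm (Ib i x),
      hWIb, htoJIb]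

  -- cond reduction helpers
  have hcNf : ∀ v : Ch, condN false v = v := fun _ => rfl
  have hcNt : ∀ v : Ch, condN true v = -v := fun _ => rfl
  have hcCf : ∀ v : Ch, condC t false v = v := fun _ => rfl
  have hcCt : ∀ v : Ch, condC t true v = compConj t v := fun _ => rfl
  have hπinj : ∀ (σ : Equiv.Perm (Fin 4)) i j, pidx σ i = pidx σ j → i = j := by
    intro σ i j hij
    have h1 := pidx_linv σ i
    have h2 := pidx_linv σ j
    rw [hij] at h1
    exact h1.symm.trans h2
  have hgood2 : ∀ σ : Equiv.Perm (Fin 4),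
      ((∀ i, pidx σ (i+1) = pidx σ i + 1) ∧ (∀ i, pidx σ (i+2) = pidx σ i + 2)
          ∧ dbit σ⁻¹ = false)
    ∨ ((∀ i, pidx σ (i+1) = pidx σ i + 2) ∧ (∀ i, pidx σ (i+2) = pidx σ i + 1)
          ∧ dbit σ⁻¹ = true) := by
    intro σ
    rcases dmap_good σ with ⟨hp, hb⟩ | ⟨hp, hb⟩
    · left
      refine ⟨hp, fun i => ?_, hb⟩
      have h2 := hp (i+1)
      rw [z11] at h2
      rw [h2, hp i, z11]
    · right
      refine ⟨hp, fun i => ?_, hb⟩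
      have h2 := hp (i+1)
      rw [z11] at h2
      rw [h2, hp i, z22]
  -- the key product-preservation property
  have key : ∀ (σ : Equiv.Perm (Fin 4)) (a b : J), ρ σ (a * b) = ρ σ a * ρ σ b := by
    intro σ
    have hEE : ∀ i j, ρ σ (e i * e j) = ρ σ (e i) * ρ σ (e j) := by
      intro i j
      by_cases h : i = j
      · subst h
        rw [hee, if_pos rfl, hRe, hee, if_pos rfl]
      · rw [hee, if_neg h, map_zero, hRe, hRe, hee,
          if_neg (fun hc => h (hπinj σ _ _ hc))]
    have hEI : ∀ i j x, ρ σ (e i * ι j x) = ρ σ (e i) * ρ σ (ι j x) := by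
      intro i j x
      rcases zmod3_tri i j with h | h | h
      · subst h
        rw [heι0, map_zero, hRe, hRι, heι0]
      · subst h
        rw [heι1, map_smul, hRι, hRe]
        rcases hgood2 σ with ⟨hp, _, _⟩ | ⟨hp, _, _⟩
        · rw [hp j, heι1]
        · rw [hp j, heι2]
      · subst h
        rw [heι2, map_smul, hRι, hRe]
        rcases hgood2 σ with ⟨_, hp2, _⟩ | ⟨_, hp2, _⟩
        · rw [hp2 j, heι2]
        · rw [hp2 j, heι1]
    have hIE : ∀ i j x, ρ σ (ι j x * e i) = ρ σ (ι j x) * ρ σ (e i) := by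
      intro i j x
      rw [hcomm, hEI, hcomm]
    have hIId : ∀ i x y, ρ σ (ι i x * ι i y) = ρ σ (ι i x) * ρ σ (ι i y) := by
      intro i x y
      rw [hιιs, map_smul, map_add, hRe, hRe, hRι, hRι]
      have hsame : ι (pidx σ i) (condN (eff σ i) (condC t (dbit σ⁻¹) x))
          * ι (pidx σ i) (condN (eff σ i) (condC t (dbit σ⁻¹) y))
          = ι (pidx σ i) (condC t (dbit σ⁻¹) x) * ι (pidx σ i) (condC t (dbit σ⁻¹) y) := by
        cases eff σ i
        · rw [hcNf, hcNf]
        · rw [hcNt, hcNt, (hιlin _).map_neg, (hιlin _).map_neg, neg_mul_neg]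
      rw [hsame, hιιs]
      rcases hgood2 σ with ⟨hp1, hp2, hb⟩ | ⟨hp1, hp2, hb⟩
      · rw [hb, hcCf, hcCf, hp1 i, hp2 i]
      · rw [hb, hcCt, hcCt, hcc, hts, hp1 i, hp2 i,
          add_comm (e (pidx σ i + 1)) (e (pidx σ i + 2))]
    have hIIo : ∀ i x y, ρ σ (ι i x * ι (i+1) y) = ρ σ (ι i x) * ρ σ (ι (i+1) y) := by
      intro i x y
      rw [hιι, map_smul, hRι, hRι, hRι]
      have core : (2:k)⁻¹ • ι (pidx σ (i+2)) (condC t (dbit σ⁻¹) (compConj t (x*y)))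
          = ι (pidx σ i) (condC t (dbit σ⁻¹) x)
            * ι (pidx σ (i+1)) (condC t (dbit σ⁻¹) y) := by
        rcases hgood2 σ with ⟨hp1, hp2, hb⟩ | ⟨hp1, hp2, hb⟩
        · rw [hb, hcCf, hcCf, hcCf, hp1 i, hp2 i]
          exact (hιι (pidx σ i) x y).symm
        · rw [hb, hcCt, hcCt, hcCt, hp1 i, hp2 i, hcc]
          have h := hιι (pidx σ i + 2) (compConj t y) (compConj t x)
          rw [z21, z22, hcm'] at h
          rw [hcomm, h]
      have hsx := eff_good σ i
      cases hs0 : eff σ i <;> cases hs1 : eff σ (i+1) <;>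
        rw [hs0, hs1] at hsx <;> rw [hsx]
      · simp only [show (false ^^ false) = false from rfl, hcNf]
        exact core
      · simp only [show (false ^^ true) = true from rfl, hcNt, hcNf]
        rw [(hιlin _).map_neg, smul_neg, (hιlin _).map_neg, mul_neg, core]
      · simp only [show (true ^^ false) = true from rfl, hcNt, hcNf]
        rw [(hιlin _).map_neg, smul_neg, (hιlin _).map_neg, neg_mul, core]
      · simp only [show (true ^^ true) = false from rfl, hcNt, hcNf]
        rw [(hιlin _).map_neg, (hιlin _).map_neg, neg_mul_neg]
        exact core
    have hII : ∀ i j x y, ρ σ (ι i x * ι j y) = ρ σ (ι i x) * ρ σ (ι j y) := by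
      intro i j x y
      rcases zmod3_tri j i with h | h | h
      · subst h
        exact hIId _ x y
      · subst h
        exact hIIo _ x y
      · subst h
        have h2 := hIIo (i+2) y x
        rw [z21] at h2
        rw [hcomm, h2, hcomm]
    have hbasisR : ∀ u : J, (∀ j, ρ σ (u * e j) = ρ σ u * ρ σ (e j)) →
        (∀ j y, ρ σ (u * ι j y) = ρ σ u * ρ σ (ι j y)) →
        ∀ b, ρ σ (u * b) = ρ σ u * ρ σ b := by
      intro u h1 h2 b
      obtain ⟨c, z, hb⟩ := hspanJ b
      rw [hb]
      simp only [mul_add, Finset.mul_sum, mul_smul_comm, map_add, map_sum, map_smul, h1, h2]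
    have hE : ∀ i b, ρ σ (e i * b) = ρ σ (e i) * ρ σ b :=
      fun i => hbasisR (e i) (fun j => hEE i j) (fun j y => hEI i j y)
    have hI : ∀ i0 x b, ρ σ (ι i0 x * b) = ρ σ (ι i0 x) * ρ σ b :=
      fun i0 x => hbasisR (ι i0 x) (fun j => hIE j i0 x) (fun j y => hII i0 j x y)
    intro a b
    obtain ⟨c, z, ha⟩ := hspanJ a
    rw [ha]
    simp only [add_mul, Finset.sum_mul, smul_mul_assoc, map_add, map_sum, map_smul, hE, hI]
  -- injectivity
  have e_inj : ∀ i j, e i = e j → i = j := by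
    intro i j hij
    by_contra hne
    have h := hinj (a₁ := Eb i) (a₂ := Eb j) (by rw [htoJEb, htoJEb, hij])
    have h1 : (if i = i then (1:k) else 0) = (if i = j then 1 else 0) :=
      congrArg (fun p => p.1 i) h
    rw [if_pos rfl, if_neg hne] at h1
    exact one_ne_zero h1
  have ι_inj : ∀ i x, ι i x = 0 → x = 0 := by
    intro i x hx
    have h := hinj (a₁ := Ib i x) (a₂ := 0) (by rw [htoJIb, map_zero, hx])
    have h1 : (if i = i then x else 0) = 0 := congrArg (fun p => p.2 i) h
    rwa [if_pos rfl] at h1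
  have h2e1 : (2:k) • (1:Ch) ≠ 0 := by
    intro hz
    have h := congrArg t hz
    rw [map_smul, ht1, map_zero, smul_eq_mul] at h
    exact (mul_ne_zero hk2 hk2) h
  have hcC1 : ∀ b : Bool, condC t b (1:Ch) = 1 := by
    intro b
    cases b
    · rfl
    · exact hc1
  have hρinj : Function.Injective ρ := by
    intro σ τ hστ
    have hq : ∀ q : J, ρ σ q = ρ τ q := fun q => by rw [hστ]
    have hπ : ∀ i, pidx σ i = pidx τ i := by
      intro i
      apply e_inj
      rw [← hRe σ i, ← hRe τ i, hq]
    have hs : ∀ i, eff σ i = eff τ i := by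
      intro i
      have h := hq (ι i 1)
      rw [hRι, hRι, hπ i, hcC1, hcC1] at h
      have hne : ι (pidx τ i) (1:Ch) ≠ ι (pidx τ i) (-1:Ch) := by
        intro heq
        have hsub : ι (pidx τ i) ((1:Ch) - (-1)) = 0 := by
          rw [(hιlin _).map_sub, heq, sub_self]
        rw [show (1:Ch) - (-1) = (2:k) • (1:Ch) from by rw [two_smul]; abel] at hsub
        exact h2e1 (ι_inj _ _ hsub)
      cases hsσ : eff σ i <;> cases hsτ : eff τ i <;>
          simp only [hsσ, hsτ, hcNf, hcNt] at h <;>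
        first
          | rfl
          | exact absurd h hne
          | exact absurd h.symm hne
    exact dmap_inj σ τ hπ hs
  -- assembly
  refine ⟨ρ, hρinj, key, ?_, ?_, ?_, ?_⟩
  · obtain ⟨hp, hb, h0, h1, h2⟩ := gen_tau1
    refine ⟨fun i => by rw [hRe, hp], fun x => ?_, fun x => ?_, fun x => ?_⟩
    · rw [hRι, hp, h0, hb, hcCf, hcNf]
    · rw [hRι, hp, h1, hb, hcCf, hcNt]
      exact (hιlin _).map_neg x
    · rw [hRι, hp, h2, hb, hcCf, hcNt]
      exact (hιlin _).map_neg x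
  · obtain ⟨hp, hb, h0, h1, h2⟩ := gen_tau2
    refine ⟨fun i => by rw [hRe, hp], fun x => ?_, fun x => ?_, fun x => ?_⟩
    · rw [hRι, hp, h0, hb, hcCf, hcNt]
      exact (hιlin _).map_neg x
    · rw [hRι, hp, h1, hb, hcCf, hcNf]
    · rw [hRι, hp, h2, hb, hcCf, hcNt]
      exact (hιlin _).map_neg x
  · obtain ⟨hp, hb, hs⟩ := gen_phi
    exact ⟨fun i => by rw [hRe, hp],
      fun i x => by rw [hRι, hp, hs i, hb, hcCf, hcNf]⟩
  · obtain ⟨hp0, hp1, hp2, hb, hs⟩ := gen_tau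
    refine ⟨by rw [hRe, hp0], by rw [hRe, hp1], by rw [hRe, hp2],
      fun x => ?_, fun x => ?_, fun x => ?_⟩
    · rw [hRι, hp0, hs 0, hb, hcCt, hcNf]
    · rw [hRι, hp1, hs 1, hb, hcCt, hcNf]
    · rw [hRι, hp2, hs 2, hb, hcCt, hcNf]
end

section
/- In J = H₃(Ĉ), the derivations dᵢ(z) = d_{e_{i+1}−e_{i+2}, ιᵢ(z)} (where d_{x,y}(w) = x∘(y∘w) − y∘(x∘w)) satisfy: dᵢ(z)(e_{i+1}) = −(1/2)ιᵢ(z), dᵢ(z)(e_{i+2}) = (1/2)ιᵢ(z), dᵢ(z)(eᵢ) = 0, dᵢ(z)(ι_{i+1}(t)) = (1/2)ι_{i+2}(conj(zt)), dᵢ(z)(ι_{i+2}(t)) = −(1/2)ι_{i+1}(conj(tz)), and dᵢ(z)(ιᵢ(t)) = (1/2)t(z t̄)(e_{i+1} − e_{i+2}). -/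
/-- The inner derivation `d_{x,y}(w) = x∘(y∘w) − y∘(x∘w)` of a Jordan algebra. -/
def jordanDer {J : Type*} [NonUnitalNonAssocRing J] (x y w : J) : J :=
  x * (y * w) - y * (x * w)

/-- In `J = H₃(Ĉ)`, the derivations
`dᵢ(z) = d_{e_{i+1}−e_{i+2}, ιᵢ(z)}` satisfy the six evaluation formulas
`dᵢ(z)(e_{i+1}) = −(1/2)ιᵢ(z)`, `dᵢ(z)(e_{i+2}) = (1/2)ιᵢ(z)`, `dᵢ(z)(eᵢ) = 0`,
`dᵢ(z)(ι_{i+1}(t)) = (1/2)ι_{i+2}(conj(zt))`,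
`dᵢ(z)(ι_{i+2}(t)) = −(1/2)ι_{i+1}(conj(tz))`, and
`dᵢ(z)(ιᵢ(t)) = (1/2)t(z t̄)(e_{i+1} − e_{i+2})`. -/
theorem hermitianJordan_der_evaluations
    (k : Type*) [Field k] (hk2 : (2 : k) ≠ 0) (hk3 : (3 : k) ≠ 0)
    (Ch : Type*) [NonAssocRing Ch] [Module k Ch]
    [SMulCommClass k Ch Ch] [IsScalarTower k Ch Ch]
    (t : Ch →ₗ[k] k)
    (J : Type*) [NonUnitalNonAssocRing J] [Module k J]
    [SMulCommClass k J J] [IsScalarTower k J J]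
    (e : ZMod 3 → J) (ι : ZMod 3 → Ch → J)
    (hcomm : ∀ a b : J, a * b = b * a)
    (hee : ∀ i j, e i * e j = if i = j then e i else 0)
    (heι1 : ∀ i x, e (i + 1) * ι i x = (2 : k)⁻¹ • ι i x)
    (heι2 : ∀ i x, e (i + 2) * ι i x = (2 : k)⁻¹ • ι i x)
    (heι0 : ∀ i x, e i * ι i x = 0)
    (hιι : ∀ i x y, ι i x * ι (i + 1) y = (2 : k)⁻¹ • ι (i + 2) (compConj t (x * y)))
    (hιιs : ∀ i x y,
      ι i x * ι i y = ((2 : k)⁻¹ * t (x * compConj t y)) • (e (i + 1) + e (i + 2))) :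
    ∀ (i : ZMod 3) (z s : Ch),
      jordanDer (e (i + 1) - e (i + 2)) (ι i z) (e (i + 1)) = - ((2 : k)⁻¹ • ι i z) ∧
      jordanDer (e (i + 1) - e (i + 2)) (ι i z) (e (i + 2)) = (2 : k)⁻¹ • ι i z ∧
      jordanDer (e (i + 1) - e (i + 2)) (ι i z) (e i) = 0 ∧
      jordanDer (e (i + 1) - e (i + 2)) (ι i z) (ι (i + 1) s) =
        (2 : k)⁻¹ • ι (i + 2) (compConj t (z * s)) ∧
      jordanDer (e (i + 1) - e (i + 2)) (ι i z) (ι (i + 2) s) =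
        - ((2 : k)⁻¹ • ι (i + 1) (compConj t (s * z))) ∧
      jordanDer (e (i + 1) - e (i + 2)) (ι i z) (ι i s) =
        ((2 : k)⁻¹ * t (z * compConj t s)) • (e (i + 1) - e (i + 2)) := by
  intro i z s
  have h11 : ∀ j : ZMod 3, j + 1 + 1 = j + 2 := by decide
  have h22 : ∀ j : ZMod 3, j + 2 + 2 = j + 1 := by decide
  have h21 : ∀ j : ZMod 3, j + 2 + 1 = j := by decide
  have hne12 : (i + 1) ≠ (i + 2) := by revert i; decide
  have hne21 : (i + 2) ≠ (i + 1) := by revert i; decide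
  have hne10 : (i + 1) ≠ i := by revert i; decide
  have hne20 : (i + 2) ≠ i := by revert i; decide
  -- idempotent products
  have E11 : e (i+1) * e (i+1) = e (i+1) := by rw [hee, if_pos rfl]
  have E22 : e (i+2) * e (i+2) = e (i+2) := by rw [hee, if_pos rfl]
  have E12 : e (i+1) * e (i+2) = 0 := by rw [hee, if_neg hne12]
  have E21 : e (i+2) * e (i+1) = 0 := by rw [hee, if_neg hne21]
  have E10 : e (i+1) * e i = 0 := by rw [hee, if_neg hne10]
  have E20 : e (i+2) * e i = 0 := by rw [hee, if_neg hne20]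
  -- idempotent–coordinate products
  have A1 : ∀ x, e (i+1) * ι i x = (2:k)⁻¹ • ι i x := heι1 i
  have A2 : ∀ x, e (i+2) * ι i x = (2:k)⁻¹ • ι i x := heι2 i
  have A0 : ∀ x, e i * ι i x = 0 := heι0 i
  have A1' : ∀ x, ι i x * e (i+1) = (2:k)⁻¹ • ι i x := fun x => by
    rw [hcomm]; exact A1 x
  have A2' : ∀ x, ι i x * e (i+2) = (2:k)⁻¹ • ι i x := fun x => by
    rw [hcomm]; exact A2 x
  have A0' : ∀ x, ι i x * e i = 0 := fun x => by rw [hcomm]; exact A0 x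
  have B0 : ∀ x, e (i+1) * ι (i+1) x = 0 := heι0 (i+1)
  have B2 : ∀ x, e (i+2) * ι (i+1) x = (2:k)⁻¹ • ι (i+1) x := fun x => by
    have := heι1 (i+1) x; rwa [h11] at this
  have C1 : ∀ x, e (i+1) * ι (i+2) x = (2:k)⁻¹ • ι (i+2) x := fun x => by
    have := heι2 (i+2) x; rwa [h22] at this
  have C0 : ∀ x, e (i+2) * ι (i+2) x = 0 := heι0 (i+2)
  -- coordinate–coordinate products
  have M1 : ι i z * ι (i+1) s = (2:k)⁻¹ • ι (i+2) (compConj t (z * s)) := hιι i z s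
  have M2 : ι i z * ι (i+2) s = (2:k)⁻¹ • ι (i+1) (compConj t (s * z)) := by
    rw [hcomm]
    have := hιι (i+2) s z
    rw [h21, h22] at this
    exact this
  have M0 : ι i z * ι i s = ((2:k)⁻¹ * t (z * compConj t s)) • (e (i+1) + e (i+2)) :=
    hιιs i z s
  refine ⟨?_, ?_, ?_, ?_, ?_, ?_⟩
  · simp only [jordanDer, sub_mul, mul_sub, A1', E11, E21, sub_zero, A1, A2,
      mul_smul_comm, smul_sub, smul_zero, zero_sub, sub_self]
    try match_scalars
    all_goals try (field_simp; try ring)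
    all_goals try tauto
  · simp only [jordanDer, sub_mul, mul_sub, A2', E12, E22, zero_sub, A1, A2,
      mul_smul_comm, smul_sub, smul_zero, sub_self, mul_neg, neg_zero]
    try match_scalars
    all_goals try (field_simp; try ring)
    all_goals try tauto
  · simp only [jordanDer, sub_mul, mul_sub, A0', E10, E20, sub_self, mul_zero,
      zero_sub, sub_zero, neg_zero]
  · simp only [jordanDer, sub_mul, mul_sub, M1, B0, B2, mul_smul_comm, smul_smul,
      C1, C0, smul_zero, sub_zero, zero_sub, mul_neg, neg_neg, M2, smul_sub]
    try match_scalars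
    all_goals try (field_simp; try ring)
    all_goals try tauto
  · simp only [jordanDer, sub_mul, mul_sub, M2, C1, C0, B0, B2, mul_smul_comm,
      smul_smul, smul_zero, zero_sub, sub_zero, mul_neg, M1, smul_sub]
    try match_scalars
    all_goals try (field_simp; try ring)
    all_goals try tauto
  · simp only [jordanDer, sub_mul, mul_sub, M0, A1, A2, sub_self, mul_zero,
      mul_smul_comm, mul_add, E11, E12, E21, E22, add_zero, zero_add, smul_sub,
      smul_add, sub_zero]
    try match_scalars
    all_goals try (field_simp; try ring)
    all_goals try tauto
end

section
/- Let g be a Lie algebra with an S₄-action by automorphisms whose coordinate algebra A = g_{(1̄,0̄)} (with x·y = −τ([φ(x),φ²(y)]), x̄ = −τ(x)) is unital with unit 1. Writing ι₀(x) = x, ι₁(x) = φ(x), ι₂(x) = φ²(x), one has [ιᵢ(x), ι_{i+1}(y)] = ι_{i+2}(conj(x·y)), and the span s of ι₀(1), ι₁(1), ι₂(1) is a Lie subalgebra of g isomorphic to so₃ via ιᵢ(1) ↦ Dᵢ. Moreover, for any x ∈ A with x̄ = x, [ιᵢ(1), ιᵢ(x)] = 0 for all i, so that span{ι₀(x),ι₁(x),ι₂(x)}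 is an s-submodule isomorphic to the adjoint module whenever x ≠ 0. -/
/-- Let `g` be a Lie algebra with an `S₄`-action by
automorphisms whose coordinate algebra `A = g_{(1̄,0̄)}` (with
`x·y = −τ([φ(x),φ²(y)])`, `x̄ = −τ(x)`) is unital with unit `1`.  Writing
`ι₀(x) = x`, `ι₁(x) = φ(x)`, `ι₂(x) = φ²(x)`, one has
`[ιᵢ(x), ι_{i+1}(y)] = ι_{i+2}(conj(x·y))`, the span of `ι₀(1), ι₁(1), ι₂(1)` is
a Lie subalgebra isomorphic to `so₃` via `ιᵢ(1) ↦ Dᵢ` (i.e. the brackets satisfy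
`[ιᵢ(1), ι_{i+1}(1)] = ι_{i+2}(1)`), and for any hermitian `x ∈ A`
(`x̄ = x`) one has `[ιᵢ(1), ιᵢ(x)] = 0`, so that `span{ι₀(x),ι₁(x),ι₂(x)}` is a
copy of the adjoint module whenever `x ≠ 0`. -/
theorem coordinate_algebra_so3_subalgebra
    (k : Type*) [Field k] (hk2 : (2 : k) ≠ 0) (hk3 : (3 : k) ≠ 0)
    (L : Type*) [LieRing L] [LieAlgebra k L]
    (ρ : Equiv.Perm (Fin 4) →* (L ≃ₗ[k] L))
    (hbr : ∀ σ : Equiv.Perm (Fin 4), ∀ x y : L, ρ σ ⁅x, y⁆ = ⁅ρ σ x, ρ σ y⁆)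
    -- abbreviations: τ₁ = (12)(34), τ₂ = (23)(14), φ = (123), τ = (12)
    (τ₁p τ₂p φp τp : Equiv.Perm (Fin 4))
    (hτ₁p : τ₁p = Equiv.swap (0 : Fin 4) 1 * Equiv.swap 2 3)
    (hτ₂p : τ₂p = Equiv.swap (1 : Fin 4) 2 * Equiv.swap 0 3)
    (hφp : φp = Equiv.swap (0 : Fin 4) 2 * Equiv.swap 0 1)
    (hτp : τp = Equiv.swap (0 : Fin 4) 1)
    -- the coordinate algebra `A = g_{(1̄,0̄)}` is unital with unit `one`
    (one : L)
    (hone_mem : ρ τ₁p one = one ∧ ρ τ₂p one = - one)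
    (hone : ∀ x : L, ρ τ₁p x = x → ρ τ₂p x = - x →
      - (ρ τp ⁅ρ φp one, ρ φp (ρ φp x)⁆) = x ∧
      - (ρ τp ⁅ρ φp x, ρ φp (ρ φp one)⁆) = x) :
    -- (a) `[ιᵢ(x), ι_{i+1}(y)] = ι_{i+2}(conj(x·y))` for `i = 0, 1, 2`
    (∀ x y : L, (ρ τ₁p x = x ∧ ρ τ₂p x = - x) → (ρ τ₁p y = y ∧ ρ τ₂p y = - y) →
      ⁅x, ρ φp y⁆ =
        ρ φp (ρ φp (- (ρ τp (- (ρ τp ⁅ρ φp x, ρ φp (ρ φp y)⁆))))) ∧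
      ⁅ρ φp x, ρ φp (ρ φp y)⁆ =
        - (ρ τp (- (ρ τp ⁅ρ φp x, ρ φp (ρ φp y)⁆))) ∧
      ⁅ρ φp (ρ φp x), y⁆ =
        ρ φp (- (ρ τp (- (ρ τp ⁅ρ φp x, ρ φp (ρ φp y)⁆))))) ∧
    -- (b) the `ιᵢ(1)` span a copy of `so₃`
    (- (ρ τp one) = one ∧
     ⁅one, ρ φp one⁆ = ρ φp (ρ φp one) ∧
     ⁅ρ φp one, ρ φp (ρ φp one)⁆ = one ∧
     ⁅ρ φp (ρ φp one), one⁆ = ρ φp one ∧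
     (one ≠ 0 → LinearIndependent k ![one, ρ φp one, ρ φp (ρ φp one)])) ∧
    -- (c) for hermitian `x`, `[ιᵢ(1), ιᵢ(x)] = 0` and the `ιᵢ(x)` span a copy of
    -- the adjoint module
    (∀ x : L, ρ τ₁p x = x → ρ τ₂p x = - x → - (ρ τp x) = x →
      (⁅one, x⁆ = 0 ∧ ⁅ρ φp one, ρ φp x⁆ = 0 ∧
       ⁅ρ φp (ρ φp one), ρ φp (ρ φp x)⁆ = 0) ∧
      (⁅one, ρ φp x⁆ = ρ φp (ρ φp x) ∧
       ⁅ρ φp one, ρ φp (ρ φp x)⁆ = x ∧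
       ⁅ρ φp (ρ φp one), x⁆ = ρ φp x) ∧
      (x ≠ 0 → LinearIndependent k ![x, ρ φp x, ρ φp (ρ φp x)])) := by
  -- toolbox
  have ACT : ∀ (a b : Equiv.Perm (Fin 4)) (x : L), ρ a (ρ b x) = ρ (a * b) x := by
    intro a b x; rw [map_mul]; rfl
  have ONE : ∀ x : L, ρ 1 x = x := by intro x; rw [map_one]; rfl
  have P1 : φp * φp * φp = 1 := by rw [hφp]; decide
  have P2 : τp * τp = 1 := by rw [hτp]; decide
  have P3 : τp * φp = φp * (φp * τp) := by rw [hτp, hφp]; decide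
  have P4 : τp * φp * φp = φp * τp := by rw [hτp, hφp]; decide
  have P5 : τ₁p * τp = τp * τ₁p := by rw [hτ₁p, hτp]; decide
  have P6 : τ₂p * τp = τp * (τ₁p * τ₂p) := by rw [hτ₂p, hτp, hτ₁p]; decide
  have P7 : τ₁p * φp = φp * (τ₁p * τ₂p) := by rw [hτ₁p, hφp, hτ₂p]; decide
  have P8 : τ₂p * φp = φp * τ₁p := by rw [hτ₂p, hφp, hτ₁p]; decide
  have fφ3 : ∀ x : L, ρ φp (ρ φp (ρ φp x)) = x := by
    intro x; rw [ACT, ACT, P1]; exact ONE x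
  have fτ2 : ∀ x : L, ρ τp (ρ τp x) = x := by
    intro x; rw [ACT, P2]; exact ONE x
  have s1 : ∀ x : L, ρ τp (ρ φp x) = ρ φp (ρ φp (ρ τp x)) := by
    intro x; rw [ACT, P3, ← ACT, ← ACT]
  have s2 : ∀ x : L, ρ τp (ρ φp (ρ φp x)) = ρ φp (ρ τp x) := by
    intro x; rw [ACT, ACT, P4, ← ACT]
  have htw : ∀ u v : L, ρ τp ⁅ρ φp u, ρ φp (ρ φp v)⁆ =
      ⁅ρ φp (ρ φp (ρ τp u)), ρ φp (ρ τp v)⁆ := by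
    intro u v; rw [hbr, s1, s2]
  -- the unit is hermitian: `-(ρ τp one) = one`
  have hcA1 : ρ τ₁p (-(ρ τp one)) = -(ρ τp one) := by
    rw [map_neg, ACT, P5, ← ACT, hone_mem.1]
  have hcA2 : ρ τ₂p (-(ρ τp one)) = -(-(ρ τp one)) := by
    rw [map_neg, ACT, P6, ← ACT, ← ACT, hone_mem.2, map_neg, hone_mem.1, map_neg]
  have honec := hone (-(ρ τp one)) hcA1 hcA2
  have hτc : ρ τp (-(ρ τp one)) = -one := by rw [map_neg, fτ2]
  have hBc : ⁅ρ φp (-(ρ τp one)), ρ φp (ρ φp one)⁆ = one := by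
    have h4 : ρ τp (-(ρ τp ⁅ρ φp (-(ρ τp one)), ρ φp (ρ φp one)⁆)) =
        ρ τp (-(ρ τp one)) := by rw [honec.2]
    rw [map_neg, fτ2, hτc] at h4
    exact neg_injective h4
  have hD : ⁅ρ φp one, ρ φp (ρ φp (-(ρ τp one)))⁆ = one := by
    have h4 : ρ τp (-(ρ τp ⁅ρ φp one, ρ φp (ρ φp (-(ρ τp one)))⁆)) =
        ρ τp (-(ρ τp one)) := by rw [honec.1]
    rw [map_neg, fτ2, hτc] at h4
    exact neg_injective h4
  have hB : ⁅ρ φp one, ρ φp (ρ φp one)⁆ = -(ρ τp one) := by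
    have h4 : ρ τp (-(ρ τp ⁅ρ φp one, ρ φp (ρ φp one)⁆)) = ρ τp one := by
      rw [(hone one hone_mem.1 hone_mem.2).1]
    rw [map_neg, fτ2] at h4
    rw [← h4, neg_neg]
  have hcc : ⁅ρ φp (-(ρ τp one)), ρ φp (ρ φp (-(ρ τp one)))⁆ = one := by
    have h' : ρ τp ⁅ρ φp one, ρ φp (ρ φp one)⁆ = ρ τp (-(ρ τp one)) := by rw [hB]
    rw [htw, hτc] at h'
    rw [map_neg, map_neg, neg_lie, lie_neg, neg_neg, ← lie_skew, h', neg_neg]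
  have hτd : ρ τp (-(ρ τp one) - one) = -(ρ τp one) - one := by
    rw [map_sub, hτc]; abel
  have hG : ⁅ρ φp (-(ρ τp one) - one), ρ φp (ρ φp (-(ρ τp one) - one))⁆ =
      -(ρ τp one) - one := by
    rw [map_sub, map_sub, sub_lie, lie_sub, lie_sub, hcc, hBc, hD, hB]; abel
  have hτone : -(ρ τp one) = one := by
    have h'' : ρ τp ⁅ρ φp (-(ρ τp one) - one), ρ φp (ρ φp (-(ρ τp one) - one))⁆ =
        ρ τp (-(ρ τp one) - one) := by rw [hG]
    rw [htw, hτd] at h''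
    rw [← lie_skew, hG] at h''
    have h2d : (2 : k) • (-(ρ τp one) - one) = 0 := by
      rw [two_smul]
      nth_rewrite 1 [← h'']
      exact neg_add_cancel _
    have hd0 := (smul_eq_zero.mp h2d).resolve_left hk2
    exact sub_eq_zero.mp hd0
  -- the so₃ brackets
  have b3 : ⁅ρ φp one, ρ φp (ρ φp one)⁆ = one := by rw [hB, hτone]
  have b2 : ⁅one, ρ φp one⁆ = ρ φp (ρ φp one) := by
    have h' : ρ φp (ρ φp ⁅ρ φp one, ρ φp (ρ φp one)⁆) = ρ φp (ρ φp one) := by rw [b3]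
    simp only [hbr, fφ3] at h'
    exact h'
  have b4 : ⁅ρ φp (ρ φp one), one⁆ = ρ φp one := by
    have h' : ρ φp ⁅ρ φp one, ρ φp (ρ φp one)⁆ = ρ φp one := by rw [b3]
    simp only [hbr, fφ3] at h'
    exact h'
  -- linear independence from the `V`-grading
  have hLI : ∀ u : L, ρ τ₁p u = u → ρ τ₂p u = -u → u ≠ 0 →
      LinearIndependent k ![u, ρ φp u, ρ φp (ρ φp u)] := by
    intro u h1 h2 hu
    have t11 : ρ τ₁p (ρ φp u) = -(ρ φp u) := by
      rw [ACT, P7, ← ACT, ← ACT, h2, map_neg, h1, map_neg]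
    have t12 : ρ τ₂p (ρ φp u) = ρ φp u := by
      rw [ACT, P8, ← ACT, h1]
    have t21 : ρ τ₁p (ρ φp (ρ φp u)) = -(ρ φp (ρ φp u)) := by
      rw [ACT, P7, ← ACT, ← ACT, t12, t11, map_neg]
    have t22 : ρ τ₂p (ρ φp (ρ φp u)) = -(ρ φp (ρ φp u)) := by
      rw [ACT, P8, ← ACT, t11, map_neg]
    have hv1 : ρ φp u ≠ 0 := (ρ φp).map_ne_zero_iff.mpr hu
    have hv2 : ρ φp (ρ φp u) ≠ 0 := (ρ φp).map_ne_zero_iff.mpr hv1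
    rw [Fintype.linearIndependent_iff]
    intro g hg
    rw [Fin.sum_univ_three] at hg
    simp only [Matrix.cons_val_zero, Matrix.cons_val_one, Matrix.head_cons,
      Matrix.cons_val_two, Matrix.tail_cons] at hg
    have h1' : ρ τ₁p (g 0 • u + g 1 • ρ φp u + g 2 • ρ φp (ρ φp u)) = ρ τ₁p 0 := by
      rw [hg]
    simp only [map_add, map_smul, map_zero, h1, t11, t21, smul_neg] at h1'
    have e0' : g 0 • u + g 0 • u = 0 := by
      linear_combination (norm := abel) hg + h1'
    have g0 : g 0 = 0 := by
      have h2' : (g 0 + g 0) • u = 0 := by rw [add_smul]; exact e0'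
      rcases smul_eq_zero.mp h2' with h | h
      · have h2'' : (2 : k) * g 0 = 0 := by rw [two_mul]; exact h
        exact (mul_eq_zero.mp h2'').resolve_left hk2
      · exact absurd h hu
    rw [g0, zero_smul, zero_add] at hg
    have h2' : ρ τ₂p (g 1 • ρ φp u + g 2 • ρ φp (ρ φp u)) = ρ τ₂p 0 := by rw [hg]
    simp only [map_add, map_smul, map_zero, t12, t22, smul_neg] at h2'
    have e1' : g 1 • ρ φp u + g 1 • ρ φp u = 0 := by
      linear_combination (norm := abel) hg + h2'
    have g1 : g 1 = 0 := by
      have h3' : (g 1 + g 1) • ρ φp u = 0 := by rw [add_smul]; exact e1'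
      rcases smul_eq_zero.mp h3' with h | h
      · have h3'' : (2 : k) * g 1 = 0 := by rw [two_mul]; exact h
        exact (mul_eq_zero.mp h3'').resolve_left hk2
      · exact absurd h hv1
    rw [g1, zero_smul, zero_add] at hg
    have g2 : g 2 = 0 := (smul_eq_zero.mp hg).resolve_right hv2
    intro i
    fin_cases i
    · exact g0
    · exact g1
    · exact g2
  -- (a) is a pure automorphism computation
  have hidem : ∀ z : L, -(ρ τp (-(ρ τp z))) = z := by
    intro z; rw [map_neg, fτ2, neg_neg]
  refine ⟨?_, ⟨hτone, b2, b3, b4, fun h => hLI one hone_mem.1 hone_mem.2 h⟩, ?_⟩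
  · intro x y _ _
    refine ⟨?_, (hidem _).symm, ?_⟩
    · rw [hidem, hbr, hbr]
      simp only [fφ3]
    · rw [hidem, hbr]
      simp only [fφ3]
  · -- (c)
    intro x h1 h2 h3
    have hτx : ρ τp x = -x := by
      have h'' : -(-(ρ τp x)) = -x := by rw [h3]
      rw [neg_neg] at h''
      exact h''
    have hE : ⁅ρ φp one, ρ φp (ρ φp x)⁆ = x := by
      have h4 : ρ τp (-(ρ τp ⁅ρ φp one, ρ φp (ρ φp x)⁆)) = ρ τp x := by
        rw [(hone x h1 h2).1]
      rw [map_neg, fτ2, hτx] at h4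
      exact neg_injective h4
    have hF : ⁅ρ φp x, ρ φp (ρ φp one)⁆ = x := by
      have h4 : ρ τp (-(ρ τp ⁅ρ φp x, ρ φp (ρ φp one)⁆)) = ρ τp x := by
        rw [(hone x h1 h2).2]
      rw [map_neg, fτ2, hτx] at h4
      exact neg_injective h4
    have c2a : ⁅one, ρ φp x⁆ = ρ φp (ρ φp x) := by
      have h' : ρ φp (ρ φp ⁅ρ φp one, ρ φp (ρ φp x)⁆) = ρ φp (ρ φp x) := by rw [hE]
      simp only [hbr, fφ3] at h'
      exact h'
    have c2c : ⁅ρ φp (ρ φp one), x⁆ = ρ φp x := by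
      have h' : ρ φp ⁅ρ φp one, ρ φp (ρ φp x)⁆ = ρ φp x := by rw [hE]
      simp only [hbr, fφ3] at h'
      exact h'
    have hF2 : ⁅x, ρ φp one⁆ = ρ φp (ρ φp x) := by
      have h' : ρ φp (ρ φp ⁅ρ φp x, ρ φp (ρ φp one)⁆) = ρ φp (ρ φp x) := by rw [hF]
      simp only [hbr, fφ3] at h'
      exact h'
    have hG' : ⁅ρ φp one, x⁆ = -(ρ φp (ρ φp x)) := by
      rw [← lie_skew, hF2]
    -- Jacobi identity gives `[1, x] = 0`
    have jac := leibniz_lie (ρ φp one) (ρ φp (ρ φp one)) x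
    rw [c2c, b3, hG', lie_neg] at jac
    rw [← hbr, ← hbr, ← hbr] at jac
    -- jac : ρ φp ⁅one, x⁆ = ⁅one, x⁆ + -(ρ φp (ρ φp ⁅one, x⁆))
    have jac2 : ρ φp (ρ φp ⁅one, x⁆) =
        ρ φp (⁅one, x⁆ + -(ρ φp (ρ φp ⁅one, x⁆))) := by rw [← jac]
    rw [map_add, map_neg, fφ3] at jac2
    -- jac2 : ρ φp (ρ φp ⁅one, x⁆) = ρ φp ⁅one, x⁆ + -⁅one, x⁆
    have hw : ρ φp ⁅one, x⁆ + ρ φp ⁅one, x⁆ = ⁅one, x⁆ + ⁅one, x⁆ := by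
      linear_combination (norm := abel) jac - jac2
    have h2w : (2 : k) • ρ φp ⁅one, x⁆ = (2 : k) • ⁅one, x⁆ := by
      rw [two_smul, two_smul]; exact hw
    have hwz : ρ φp ⁅one, x⁆ = ⁅one, x⁆ := smul_right_injective L hk2 h2w
    have hz0 : ⁅one, x⁆ = 0 := by
      rw [hwz, hwz] at jac2
      linear_combination (norm := abel) jac2
    refine ⟨⟨hz0, ?_, ?_⟩, ⟨c2a, hE, c2c⟩, hLI x h1 h2⟩
    · rw [← hbr, hz0, map_zero]
    · rw [← hbr, ← hbr, hz0, map_zero, map_zero]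
end
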